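/- arXiv:2508.14498 — 8 statements merged into one kernel-verified Lean document; each statement's English description precedes it below -/
import Mathlib

section
/- Let σ > 1. For every firm distribution μ (a nonnegative measurable function on [0,n] with ∫₀ⁿ μ(i) di = 1), aggregate consumption satisfies X(μ) ≤ X(μ^EQ) = (∫₀ⁿ A(i)^{σ−1} di)^{1/(σ−1)}, where μ^EQ(i) := A(i)^{σ−1} / ∫₀ⁿ A(j)^{σ−1} dj; moreover equality holds if and only if μ = μ^EQ almost everywhere, so μ^EQ is the unique maximizer of X over firm distributions. -/
/-!
With `t = 1/ρ ∈ (0,1)` the integrand of `X μ` is `(A ^ (σ-1)) ^ t · μ ^ (1-t)`, because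
`(1-β)(σ-1)/ρ = 1 - 1/ρ`. Writing `w = A ^ (σ-1)` and `f = w / ∫ w`, the weighted AM–GM
inequality `f ^ t μ ^ (1-t) ≤ t f + (1-t) μ` integrates to `∫ w ^ t μ ^ (1-t) ≤ (∫ w) ^ t` for
every density `μ` (Hölder's inequality), and the equality case of AM–GM forces `μ = f` almost
everywhere.
-/

open MeasureTheory Set Real

section

variable {α : Type*} [MeasurableSpace α] {ν : Measure α} {f g w : α → ℝ} {t w₁ w₂ : ℝ}

theorem integrable_rpow_mul_rpow_of_add_eq_one (hw₁ : 0 ≤ w₁) (hw₂ : 0 ≤ w₂) (hw : w₁ + w₂ = 1)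
    (hf₀ : 0 ≤ᵐ[ν] f) (hg₀ : 0 ≤ᵐ[ν] g) (hf : Integrable f ν) (hg : Integrable g ν) :
    Integrable (fun x => f x ^ w₁ * g x ^ w₂) ν := by
  refine ((hf.const_mul w₁).add (hg.const_mul w₂)).mono'
    ((hf.aemeasurable.pow_const w₁).mul (hg.aemeasurable.pow_const w₂)).aestronglyMeasurable ?_
  filter_upwards [hf₀, hg₀] with x hfx hgx
  rw [Real.norm_of_nonneg (mul_nonneg (rpow_nonneg hfx _) (rpow_nonneg hgx _))]
  exact geom_mean_le_arith_mean2_weighted hw₁ hw₂ hfx hgx hw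

theorem integral_rpow_mul_rpow_le_of_add_eq_one (hw₁ : 0 ≤ w₁) (hw₂ : 0 ≤ w₂) (hw : w₁ + w₂ = 1)
    (hf₀ : 0 ≤ᵐ[ν] f) (hg₀ : 0 ≤ᵐ[ν] g) (hf : Integrable f ν) (hg : Integrable g ν) :
    ∫ x, f x ^ w₁ * g x ^ w₂ ∂ν ≤ w₁ * ∫ x, f x ∂ν + w₂ * ∫ x, g x ∂ν := by
  rw [← integral_const_mul, ← integral_const_mul,
    ← integral_add (hf.const_mul w₁) (hg.const_mul w₂)]
  refine integral_mono_ae (integrable_rpow_mul_rpow_of_add_eq_one hw₁ hw₂ hw hf₀ hg₀ hf hg)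
    ((hf.const_mul w₁).add (hg.const_mul w₂)) ?_
  filter_upwards [hf₀, hg₀] with x hfx hgx
  exact geom_mean_le_arith_mean2_weighted hw₁ hw₂ hfx hgx hw

theorem integral_rpow_mul_rpow_eq_iff_of_add_eq_one (hw₁ : 0 < w₁) (hw₂ : 0 < w₂)
    (hw : w₁ + w₂ = 1) (hf₀ : 0 ≤ᵐ[ν] f) (hg₀ : 0 ≤ᵐ[ν] g) (hf : Integrable f ν)
    (hg : Integrable g ν) :
    ∫ x, f x ^ w₁ * g x ^ w₂ ∂ν = w₁ * ∫ x, f x ∂ν + w₂ * ∫ x, g x ∂ν ↔ f =ᵐ[ν] g := by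
  have hgeom := integrable_rpow_mul_rpow_of_add_eq_one hw₁.le hw₂.le hw hf₀ hg₀ hf hg
  have harith : Integrable (fun x => w₁ * f x + w₂ * g x) ν :=
    (hf.const_mul w₁).add (hg.const_mul w₂)
  have hgap : 0 ≤ᵐ[ν] fun x => w₁ * f x + w₂ * g x - f x ^ w₁ * g x ^ w₂ := by
    filter_upwards [hf₀, hg₀] with x hfx hgx
    exact sub_nonneg.2 (geom_mean_le_arith_mean2_weighted hw₁.le hw₂.le hfx hgx hw)
  rw [← integral_const_mul, ← integral_const_mul, ← integral_add (hf.const_mul w₁)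
    (hg.const_mul w₂), eq_comm, ← sub_eq_zero, ← integral_sub harith hgeom,
    integral_eq_zero_iff_of_nonneg_ae hgap (harith.sub hgeom)]
  refine Filter.eventually_congr ?_
  filter_upwards [hf₀, hg₀] with x hfx hgx
  rw [Pi.zero_apply, sub_eq_zero, eq_comm]
  exact geom_mean_eq_arith_mean2_weighted_iff_of_pos hw₁ hw₂ hfx hgx hw

theorem rpow_mul_rpow_one_sub_self {x : ℝ} (t : ℝ) (hx : 0 ≤ x) : x ^ t * x ^ (1 - t) = x := by
  rw [← rpow_add' hx (by simp), add_sub_cancel, rpow_one]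

theorem integral_rpow_mul_eq_rpow_mul_integral {h : α → ℝ} {c : ℝ} (hc : 0 < c)
    (hw₀ : 0 ≤ᵐ[ν] w) :
    ∫ x, w x ^ t * h x ∂ν = c ^ t * ∫ x, (w x / c) ^ t * h x ∂ν := by
  rw [← integral_const_mul]
  refine integral_congr_ae ?_
  filter_upwards [hw₀] with x hwx
  rw [div_rpow hwx hc.le, ← mul_assoc, mul_div_cancel₀ _ (rpow_pos_of_pos hc t).ne']

theorem integral_rpow_mul_div_integral_rpow_one_sub (hw₀ : 0 ≤ᵐ[ν] w) (hI : 0 < ∫ x, w x ∂ν) :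
    ∫ x, w x ^ t * (w x / ∫ y, w y ∂ν) ^ (1 - t) ∂ν = (∫ x, w x ∂ν) ^ t := by
  set I := ∫ x, w x ∂ν
  have hself : (fun x => (w x / I) ^ t * (w x / I) ^ (1 - t)) =ᵐ[ν] fun x => w x / I := by
    filter_upwards [hw₀] with x hwx using rpow_mul_rpow_one_sub_self t (div_nonneg hwx hI.le)
  rw [integral_rpow_mul_eq_rpow_mul_integral hI hw₀, integral_congr_ae hself, integral_div,
    div_self hI.ne', mul_one]

theorem integral_rpow_mul_rpow_one_sub_le (ht₀ : 0 ≤ t) (ht₁ : t ≤ 1) (hw₀ : 0 ≤ᵐ[ν] w)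
    (hg₀ : 0 ≤ᵐ[ν] g) (hw : Integrable w ν) (hg : Integrable g ν) (hg1 : ∫ x, g x ∂ν = 1)
    (hI : 0 < ∫ x, w x ∂ν) :
    ∫ x, w x ^ t * g x ^ (1 - t) ∂ν ≤ (∫ x, w x ∂ν) ^ t := by
  have hf₀ : 0 ≤ᵐ[ν] fun x => w x / ∫ y, w y ∂ν := by
    filter_upwards [hw₀] with x hwx using div_nonneg hwx hI.le
  have hJ := integral_rpow_mul_rpow_le_of_add_eq_one ht₀ (sub_nonneg.2 ht₁) (add_sub_cancel t 1)
    hf₀ hg₀ (hw.div_const _) hg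
  rw [integral_div, div_self hI.ne', hg1, mul_one, mul_one, add_sub_cancel] at hJ
  rw [integral_rpow_mul_eq_rpow_mul_integral hI hw₀]
  exact mul_le_of_le_one_right (rpow_nonneg hI.le t) hJ

theorem integral_rpow_mul_rpow_one_sub_eq_iff (ht₀ : 0 < t) (ht₁ : t < 1) (hw₀ : 0 ≤ᵐ[ν] w)
    (hg₀ : 0 ≤ᵐ[ν] g) (hw : Integrable w ν) (hg : Integrable g ν) (hg1 : ∫ x, g x ∂ν = 1)
    (hI : 0 < ∫ x, w x ∂ν) :
    ∫ x, w x ^ t * g x ^ (1 - t) ∂ν = (∫ x, w x ∂ν) ^ t ↔ g =ᵐ[ν] fun x => w x / ∫ y, w y ∂ν := by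
  have hf₀ : 0 ≤ᵐ[ν] fun x => w x / ∫ y, w y ∂ν := by
    filter_upwards [hw₀] with x hwx using div_nonneg hwx hI.le
  have hJ := integral_rpow_mul_rpow_eq_iff_of_add_eq_one ht₀ (sub_pos.2 ht₁) (add_sub_cancel t 1)
    hf₀ hg₀ (hw.div_const _) hg
  rw [integral_div, div_self hI.ne', hg1, mul_one, mul_one, add_sub_cancel] at hJ
  rw [integral_rpow_mul_eq_rpow_mul_integral hI hw₀, mul_eq_left₀ (rpow_pos_of_pos hI t).ne', hJ,
    Filter.eventuallyEq_comm]

theorem integrableOn_rpow_of_bounded {A : α → ℝ} {s : Set α} {b r : ℝ} (hs : MeasurableSet s)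
    (hs' : ν s ≠ ⊤) (hA : Measurable A) (hr : 0 ≤ r) (hA₀ : ∀ i ∈ s, 0 ≤ A i)
    (hAb : ∀ i ∈ s, A i ≤ b) :
    IntegrableOn (fun i => A i ^ r) s ν := by
  refine Measure.integrableOn_of_bounded (M := b ^ r) hs' (hA.pow_const r).aestronglyMeasurable
    (ae_restrict_of_forall_mem hs fun i hi => ?_)
  rw [Real.norm_of_nonneg (rpow_nonneg (hA₀ i hi) r)]
  exact rpow_le_rpow (hA₀ i hi) (hAb i hi) hr

theorem setIntegral_pos_of_forall_le {s : Set α} {c : ℝ} (hs : MeasurableSet s) (hν : ν s ≠ 0)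
    (hν' : ν s ≠ ⊤) (hc : 0 < c) (hf : IntegrableOn f s ν) (hcf : ∀ x ∈ s, c ≤ f x) :
    0 < ∫ x in s, f x ∂ν := calc
  0 < ∫ _ in s, c ∂ν := by
    rw [setIntegral_const, smul_eq_mul]
    exact mul_pos (ENNReal.toReal_pos hν hν') hc
  _ ≤ ∫ x in s, f x ∂ν := setIntegral_mono_on (integrableOn_const hν') hf hs hcf

end

theorem ces_integrand_eq {A m β σ ρ : ℝ} (hA : 0 ≤ A) (hm : 0 ≤ m) (hρ : ρ = σ * (1 - β) + β)
    (hρ0 : ρ ≠ 0) :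
    (A * m ^ (1 - β)) ^ ((σ - 1) / ρ) = (A ^ (σ - 1)) ^ ρ⁻¹ * m ^ (1 - ρ⁻¹) := by
  have hexp : (1 - β) * ((σ - 1) / ρ) = 1 - ρ⁻¹ := by
    rw [← mul_div_assoc, show (1 - β) * (σ - 1) = ρ - 1 by rw [hρ]; ring, sub_div, div_self hρ0,
      one_div]
  rw [mul_rpow hA (rpow_nonneg hm _), ← rpow_mul hm, hexp, ← rpow_mul hA, div_eq_mul_inv]

/-- For σ > 1, the long-run equilibrium distribution
`μEQ i = A i ^ (σ-1) / ∫ A ^ (σ-1)` is the unique maximizer of aggregate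
consumption `X` over firm distributions, and
`X μEQ = (∫ A ^ (σ-1)) ^ (1/(σ-1))`. -/
theorem statement0
    (n β σ ρ a b : ℝ)
    (hn : 0 < n) (hβ : β ∈ Set.Ioo (0:ℝ) 1) (hσ : 1 < σ)
    (hρ : ρ = σ * (1 - β) + β)
    (A : ℝ → ℝ) (hAmeas : Measurable A)
    (ha : 0 < a)
    (hAa : ∀ i ∈ Set.Icc (0:ℝ) n, a ≤ A i)
    (hAb : ∀ i ∈ Set.Icc (0:ℝ) n, A i ≤ b)
    (X : (ℝ → ℝ) → ℝ)
    (hX : ∀ μ : ℝ → ℝ,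
      X μ = (∫ i in Set.Icc (0:ℝ) n,
        (A i * μ i ^ (1 - β)) ^ ((σ - 1) / ρ)) ^ (ρ / (σ - 1)))
    (μEQ : ℝ → ℝ)
    (hμEQ : ∀ i, μEQ i = A i ^ (σ - 1) / ∫ j in Set.Icc (0:ℝ) n, A j ^ (σ - 1)) :
    X μEQ = (∫ i in Set.Icc (0:ℝ) n, A i ^ (σ - 1)) ^ (1 / (σ - 1)) ∧
    ∀ μ : ℝ → ℝ, Measurable μ → (∀ i ∈ Set.Icc (0:ℝ) n, 0 ≤ μ i) →
      (∫ i in Set.Icc (0:ℝ) n, μ i) = 1 →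
      X μ ≤ X μEQ ∧
      (X μ = X μEQ ↔ μ =ᵐ[volume.restrict (Set.Icc (0:ℝ) n)] μEQ) := by
  have hρ1 : 1 < ρ := by rw [hρ]; nlinarith [hβ.2]
  have hp : 0 < ρ / (σ - 1) := div_pos (by linarith) (by linarith)
  set S := Icc (0:ℝ) n
  set I := ∫ i in S, A i ^ (σ - 1)
  have hA₀ : ∀ i ∈ S, 0 ≤ A i := fun i hi => ha.le.trans (hAa i hi)
  have hw₀ : 0 ≤ᵐ[volume.restrict S] fun i => A i ^ (σ - 1) :=
    ae_restrict_of_forall_mem measurableSet_Icc fun i hi => rpow_nonneg (hA₀ i hi) _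
  have hw : IntegrableOn (fun i => A i ^ (σ - 1)) S := integrableOn_rpow_of_bounded
    measurableSet_Icc measure_Icc_lt_top.ne hAmeas (by linarith) hA₀ hAb
  have hI : 0 < I := setIntegral_pos_of_forall_le measurableSet_Icc (by simp [S, hn])
    measure_Icc_lt_top.ne (rpow_pos_of_pos ha (σ - 1)) hw
    fun i hi => rpow_le_rpow ha.le (hAa i hi) (by linarith)
  have hXform : ∀ μ : ℝ → ℝ, (∀ i ∈ S, 0 ≤ μ i) →
      X μ = (∫ i in S, (A i ^ (σ - 1)) ^ ρ⁻¹ * μ i ^ (1 - ρ⁻¹)) ^ (ρ / (σ - 1)) := fun μ hμ => by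
    rw [hX]
    exact congrArg (· ^ _) (setIntegral_congr_fun measurableSet_Icc fun i hi =>
      ces_integrand_eq (hA₀ i hi) (hμ i hi) hρ (by linarith))
  obtain rfl : μEQ = fun i => A i ^ (σ - 1) / I := funext hμEQ
  have hXEQ : X (fun i => A i ^ (σ - 1) / I) = (I ^ ρ⁻¹) ^ (ρ / (σ - 1)) := by
    rw [hXform _ fun i hi => div_nonneg (rpow_nonneg (hA₀ i hi) _) hI.le,
      integral_rpow_mul_div_integral_rpow_one_sub hw₀ hI]
  refine ⟨?_, fun μ _ hμ₀ hμ1 => ?_⟩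
  · rw [hXEQ, ← rpow_mul hI.le, ← mul_div_assoc, inv_mul_cancel₀ (by linarith)]
  have hμ₀' : 0 ≤ᵐ[volume.restrict S] μ := ae_restrict_of_forall_mem measurableSet_Icc hμ₀
  have hμ : IntegrableOn μ S := Integrable.of_integral_ne_zero (hμ1 ▸ one_ne_zero)
  have hJ₀ : 0 ≤ ∫ i in S, (A i ^ (σ - 1)) ^ ρ⁻¹ * μ i ^ (1 - ρ⁻¹) := setIntegral_nonneg
    measurableSet_Icc fun i hi => mul_nonneg (rpow_nonneg (rpow_nonneg (hA₀ i hi) _) _)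
      (rpow_nonneg (hμ₀ i hi) _)
  have ht₀ : 0 < ρ⁻¹ := inv_pos.2 (by linarith)
  have ht₁ : ρ⁻¹ < 1 := inv_lt_one_of_one_lt₀ hρ1
  rw [hXform μ hμ₀, hXEQ, rpow_le_rpow_iff hJ₀ (rpow_nonneg hI.le _) hp,
    rpow_left_inj hJ₀ (rpow_nonneg hI.le _) hp.ne',
    integral_rpow_mul_rpow_one_sub_eq_iff ht₀ ht₁ hw₀ hμ₀' hw hμ hμ1 hI]
  exact ⟨integral_rpow_mul_rpow_one_sub_le ht₀.le ht₁.le hw₀ hμ₀' hw hμ hμ1 hI, Iff.rfl⟩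
end

section
/- Let 0 < σ < 1, so that (σ−1)/ρ < 0 and ρ/(σ−1) < 0. For every firm distribution μ that is strictly positive almost everywhere, ∫₀ⁿ (A(i) μ(i)^{1−β})^{(σ−1)/ρ} di ≥ ∫₀ⁿ (A(i) μ^EQ(i)^{1−β})^{(σ−1)/ρ} di where μ^EQ(i) := A(i)^{σ−1} / ∫₀ⁿ A(j)^{σ−1} dj; consequently X(μ) ≤ X(μ^EQ) = (∫₀ⁿ A(i)^{σ−1} di)^{1/(σ−1)}, with equality if and only if μ = μ^EQ almost everywhere. -/
open MeasureTheory Set Real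
open scoped ENNReal

/-!
Writing `e = (1 - β)(σ - 1)/ρ < 0` and `h = A ^ (σ - 1)`, the integrand of `X` is
`h ^ (1 - e) * μ ^ e`, a strictly convex function of `μ(i)`. At `μEQ = h / ∫ h` the tangent
lines of these functions all have the same slope `e (∫ h) ^ (1 - e)`, so integrating the tangent
inequality against the two densities `μ` and `μEQ`, both of total mass one, makes the linear
terms cancel: `∫ h ^ (1 - e) μ ^ e ≥ ∫ h ^ (1 - e) μEQ ^ e = (∫ h) ^ (1 - e)`, with equality
only if `μ = μEQ` a.e. Since `ρ / (σ - 1) < 0`, raising to this power reverses the inequality.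
-/

namespace Real

theorem one_add_mul_sub_one_lt_rpow_of_neg {e t : ℝ} (he : e < 0) (ht : 0 < t) (ht1 : t ≠ 1) :
    1 + e * (t - 1) < t ^ e :=
  calc 1 + e * (t - 1) < 1 + e * log t := by nlinarith [log_lt_sub_one_of_pos ht ht1]
    _ ≤ exp (e * log t) := by linarith [add_one_le_exp (e * log t)]
    _ = t ^ e := by rw [rpow_def_of_pos ht, mul_comm]

theorem rpow_add_mul_rpow_sub_one_mul_sub_lt_of_neg {e x y : ℝ} (he : e < 0) (hx : 0 < x)
    (hy : 0 < y) (hxy : x ≠ y) : y ^ e + e * y ^ (e - 1) * (x - y) < x ^ e := by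
  have hbern := one_add_mul_sub_one_lt_rpow_of_neg he (div_pos hx hy)
    (by rwa [ne_eq, div_eq_one_iff_eq hy.ne'])
  calc y ^ e + e * y ^ (e - 1) * (x - y) = y ^ e * (1 + e * (x / y - 1)) := by
        rw [rpow_sub_one hy.ne']; field_simp
    _ < y ^ e * (x / y) ^ e := by gcongr
    _ = x ^ e := by rw [div_rpow hx.le hy.le]; field_simp

theorem rpow_one_sub_mul_rpow_tangent_lt {e h Z x : ℝ} (he : e < 0) (hh : 0 < h) (hZ : 0 < Z)
    (hx : 0 < x) (hxh : x ≠ h / Z) :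
    h ^ (1 - e) * (h / Z) ^ e + -e * Z ^ (1 - e) * (h / Z)
      < h ^ (1 - e) * x ^ e + -e * Z ^ (1 - e) * x := by
  have hslope : h ^ (1 - e) * (h / Z) ^ (e - 1) = Z ^ (1 - e) := by
    rw [div_rpow hh.le hZ.le, mul_div_assoc', ← rpow_add hh, sub_add_sub_cancel', sub_self,
      rpow_zero, one_div, ← rpow_neg hZ.le, neg_sub]
  have htangent := mul_lt_mul_of_pos_left
    (rpow_add_mul_rpow_sub_one_mul_sub_lt_of_neg he hx (div_pos hh hZ) hxh)
    (rpow_pos_of_pos hh (1 - e))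
  linear_combination htangent - e * (x - h / Z) * hslope

theorem rpow_one_sub_mul_rpow_tangent_le {e h Z x : ℝ} (he : e < 0) (hh : 0 < h) (hZ : 0 < Z)
    (hx : 0 < x) :
    h ^ (1 - e) * (h / Z) ^ e + -e * Z ^ (1 - e) * (h / Z)
      ≤ h ^ (1 - e) * x ^ e + -e * Z ^ (1 - e) * x := by
  rcases eq_or_ne x (h / Z) with rfl | hxh
  · rfl
  · exact (rpow_one_sub_mul_rpow_tangent_lt he hh hZ hx hxh).le

end Real

theorem ENNReal.rpow_le_rpow_of_nonpos {x y : ℝ≥0∞} {z : ℝ} (h : x ≤ y) (hz : z ≤ 0) :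
    y ^ z ≤ x ^ z := by
  rw [← neg_neg z, rpow_neg y, rpow_neg x]
  exact ENNReal.inv_le_inv.mpr (rpow_le_rpow h (neg_nonneg.mpr hz))

section SetIntegral

variable {α : Type*} [MeasurableSpace α] {μ : Measure α} {s : Set α}

theorem integrableOn_rpow_of_le_of_nonpos {A : α → ℝ} {a p : ℝ} (hs : μ s < ∞)
    (hsm : MeasurableSet s) (hA : Measurable A) (ha : 0 < a) (hAa : ∀ i ∈ s, a ≤ A i)
    (hp : p ≤ 0) : IntegrableOn (fun i => A i ^ p) s μ :=
  IntegrableOn.of_bound hs (hA.pow_const p).aestronglyMeasurable (a ^ p) <| by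
    filter_upwards [ae_restrict_mem hsm] with i hi
    rw [norm_of_nonneg (rpow_nonneg (ha.trans_le (hAa i hi)).le _)]
    exact rpow_le_rpow_of_nonpos ha (hAa i hi) hp

theorem setIntegral_pos_of_forall_mem_pos {f : α → ℝ} (hsm : MeasurableSet s) (hs : 0 < μ s)
    (hf : IntegrableOn f s μ) (hpos : ∀ i ∈ s, 0 < f i) : 0 < ∫ i in s, f i ∂μ := by
  rw [setIntegral_pos_iff_support_of_nonneg_ae
      ((ae_restrict_mem hsm).mono fun i hi => (hpos i hi).le) hf,
    inter_eq_right.mpr fun i hi => Function.mem_support.mpr (hpos i hi).ne']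
  exact hs

end SetIntegral

section ReverseHolder

variable {α : Type*} [MeasurableSpace α] {ν : Measure α} {h x : α → ℝ} {e : ℝ}

theorem lintegral_rpow_one_sub_mul_rpow_add_mul {k : ℝ} (hk : 0 ≤ k) (hh : 0 ≤ᵐ[ν] h)
    (hxi : Integrable x ν) (hx : 0 ≤ᵐ[ν] x) (hx1 : ∫ i, x i ∂ν = 1) :
    ∫⁻ i, ENNReal.ofReal (h i ^ (1 - e) * x i ^ e + k * x i) ∂ν
      = ∫⁻ i, ENNReal.ofReal (h i ^ (1 - e) * x i ^ e) ∂ν + ENNReal.ofReal k := by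
  have hsplit : ∀ᵐ i ∂ν, ENNReal.ofReal (h i ^ (1 - e) * x i ^ e + k * x i)
      = ENNReal.ofReal (h i ^ (1 - e) * x i ^ e) + ENNReal.ofReal k * ENNReal.ofReal (x i) := by
    filter_upwards [hh, hx] with i hi hxi
    rw [ENNReal.ofReal_add (mul_nonneg (rpow_nonneg hi _) (rpow_nonneg hxi _))
      (mul_nonneg hk hxi), ENNReal.ofReal_mul hk]
  rw [lintegral_congr_ae hsplit,
    lintegral_add_right' _ (hxi.aemeasurable.ennreal_ofReal.const_mul _),
    lintegral_const_mul' _ _ ENNReal.ofReal_ne_top, ← ofReal_integral_eq_lintegral_ofReal hxi hx,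
    hx1, ENNReal.ofReal_one, mul_one]

theorem lintegral_rpow_one_sub_mul_div_integral_rpow (hhi : Integrable h ν)
    (hh : ∀ᵐ i ∂ν, 0 < h i) (hZ : 0 < ∫ i, h i ∂ν) :
    ∫⁻ i, ENNReal.ofReal (h i ^ (1 - e) * (h i / ∫ j, h j ∂ν) ^ e) ∂ν
      = ENNReal.ofReal ((∫ i, h i ∂ν) ^ (1 - e)) := by
  set Z := ∫ i, h i ∂ν
  have hpt : ∀ᵐ i ∂ν, ENNReal.ofReal (h i ^ (1 - e) * (h i / Z) ^ e)
      = ENNReal.ofReal (h i) * ENNReal.ofReal (Z ^ (-e)) := by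
    filter_upwards [hh] with i hi
    rw [← ENNReal.ofReal_mul hi.le, div_rpow hi.le hZ.le, rpow_neg hZ.le, mul_div_assoc',
      ← rpow_add hi, sub_add_cancel, rpow_one, div_eq_mul_inv]
  rw [lintegral_congr_ae hpt, lintegral_mul_const' _ _ ENNReal.ofReal_ne_top,
    ← ofReal_integral_eq_lintegral_ofReal hhi (hh.mono fun _ => le_of_lt),
    ← ENNReal.ofReal_mul hZ.le, sub_eq_add_neg, rpow_add hZ, rpow_one]

theorem lintegral_rpow_one_sub_mul_div_integral_rpow_le_and_eq_iff (he : e < 0)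
    (hhi : Integrable h ν) (hh : ∀ᵐ i ∂ν, 0 < h i) (hZ : 0 < ∫ i, h i ∂ν)
    (hxi : Integrable x ν) (hx : ∀ᵐ i ∂ν, 0 < x i) (hx1 : ∫ i, x i ∂ν = 1) :
    ∫⁻ i, ENNReal.ofReal (h i ^ (1 - e) * (h i / ∫ j, h j ∂ν) ^ e) ∂ν
        ≤ ∫⁻ i, ENNReal.ofReal (h i ^ (1 - e) * x i ^ e) ∂ν ∧
      (∫⁻ i, ENNReal.ofReal (h i ^ (1 - e) * x i ^ e) ∂ν
          = ∫⁻ i, ENNReal.ofReal (h i ^ (1 - e) * (h i / ∫ j, h j ∂ν) ^ e) ∂ν ↔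
        x =ᵐ[ν] fun i => h i / ∫ j, h j ∂ν) := by
  set Z := ∫ i, h i ∂ν
  set k := -e * Z ^ (1 - e)
  have hk : 0 ≤ k := mul_nonneg (neg_nonneg.mpr he.le) (rpow_nonneg hZ.le _)
  have hy1 : ∫ i, h i / Z ∂ν = 1 := by rw [integral_div, div_self hZ.ne']
  have hy : ∀ᵐ i ∂ν, 0 < h i / Z := hh.mono fun i hi => div_pos hi hZ
  have hlin_y := lintegral_rpow_one_sub_mul_rpow_add_mul (e := e) hk (hh.mono fun _ => le_of_lt)
    (hhi.div_const Z) (hy.mono fun _ => le_of_lt) hy1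
  have hlin_x := lintegral_rpow_one_sub_mul_rpow_add_mul (e := e) hk (hh.mono fun _ => le_of_lt)
    hxi (hx.mono fun _ => le_of_lt) hx1
  have htangent : ∀ᵐ i ∂ν,
      ENNReal.ofReal (h i ^ (1 - e) * (h i / Z) ^ e + k * (h i / Z))
        ≤ ENNReal.ofReal (h i ^ (1 - e) * x i ^ e + k * x i) := by
    filter_upwards [hh, hx] with i hi hxi
    exact ENNReal.ofReal_le_ofReal (rpow_one_sub_mul_rpow_tangent_le he hi hZ hxi)
  refine ⟨?_, fun heq => ?_, fun hxy => lintegral_congr_ae <| hxy.mono fun i hi => ?_⟩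
  · rw [← ENNReal.add_le_add_iff_right (ENNReal.ofReal_ne_top (r := k)), ← hlin_x, ← hlin_y]
    exact lintegral_mono_ae htangent
  · have hfin : ∫⁻ i, ENNReal.ofReal (h i ^ (1 - e) * (h i / Z) ^ e + k * (h i / Z)) ∂ν ≠ ∞ := by
      rw [hlin_y, lintegral_rpow_one_sub_mul_div_integral_rpow hhi hh hZ]
      exact ENNReal.add_ne_top.mpr ⟨ENNReal.ofReal_ne_top, ENNReal.ofReal_ne_top⟩
    have hae := ae_eq_of_ae_le_of_lintegral_le htangent hfin
      (by have := hhi.aemeasurable; have := hxi.aemeasurable; fun_prop)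
      (by rw [hlin_x, hlin_y, heq])
    filter_upwards [hae, hh, hx] with i hi_eq hi hxi
    by_contra hne
    refine (rpow_one_sub_mul_rpow_tangent_lt he hi hZ hxi hne).ne ?_
    rwa [ENNReal.ofReal_eq_ofReal_iff (by positivity) (by positivity)] at hi_eq
  · simp only [hi]

end ReverseHolder

theorem mul_rpow_rpow_eq_rpow_one_sub_mul_rpow {A m β σ ρ : ℝ} (hA : 0 ≤ A) (hm : 0 ≤ m)
    (hρ : ρ = σ * (1 - β) + β) (hρ0 : ρ ≠ 0) :
    (A * m ^ (1 - β)) ^ ((σ - 1) / ρ)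
      = (A ^ (σ - 1)) ^ (1 - (1 - β) * ((σ - 1) / ρ)) * m ^ ((1 - β) * ((σ - 1) / ρ)) := by
  rw [mul_rpow hA (rpow_nonneg hm _), ← rpow_mul hA, ← rpow_mul hm]
  congr 2
  field_simp
  rw [hρ]
  ring

theorem statement1_general
    (n β σ ρ a : ℝ)
    (hn : 0 < n) (hβ : β ∈ Set.Ioo (0:ℝ) 1) (hσ : σ ∈ Set.Ioo (0:ℝ) 1)
    (hρ : ρ = σ * (1 - β) + β)
    (A : ℝ → ℝ) (hAmeas : Measurable A)
    (ha : 0 < a)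
    (hAa : ∀ i ∈ Set.Icc (0:ℝ) n, a ≤ A i)
    (I : (ℝ → ℝ) → ℝ≥0∞)
    (hI : ∀ μ : ℝ → ℝ,
      I μ = ∫⁻ i in Set.Icc (0:ℝ) n,
        ENNReal.ofReal ((A i * μ i ^ (1 - β)) ^ ((σ - 1) / ρ)))
    (X : (ℝ → ℝ) → ℝ≥0∞)
    (hX : ∀ μ : ℝ → ℝ, X μ = I μ ^ (ρ / (σ - 1)))
    (μEQ : ℝ → ℝ)
    (hμEQ : ∀ i, μEQ i = A i ^ (σ - 1) / ∫ j in Set.Icc (0:ℝ) n, A j ^ (σ - 1)) :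
    X μEQ = ENNReal.ofReal
        ((∫ i in Set.Icc (0:ℝ) n, A i ^ (σ - 1)) ^ (1 / (σ - 1))) ∧
    ∀ μ : ℝ → ℝ, Measurable μ → (∀ i ∈ Set.Icc (0:ℝ) n, 0 ≤ μ i) →
      (∫ i in Set.Icc (0:ℝ) n, μ i) = 1 →
      (∀ᵐ i ∂(volume.restrict (Set.Icc (0:ℝ) n)), 0 < μ i) →
      I μEQ ≤ I μ ∧
      X μ ≤ X μEQ ∧
      (X μ = X μEQ ↔ μ =ᵐ[volume.restrict (Set.Icc (0:ℝ) n)] μEQ) := by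
  obtain ⟨hβ0, hβ1⟩ := hβ
  obtain ⟨hσ0, hσ1⟩ := hσ
  have hρ0 : 0 < ρ := by rw [hρ]; nlinarith
  set e := (1 - β) * ((σ - 1) / ρ)
  have he : e < 0 := mul_neg_of_pos_of_neg (by linarith) (div_neg_of_neg_of_pos (by linarith) hρ0)
  have hexp : ρ / (σ - 1) < 0 := div_neg_of_pos_of_neg hρ0 (by linarith)
  have hApos : ∀ i ∈ Icc 0 n, 0 < A i := fun i hi => ha.trans_le (hAa i hi)
  have hI' : ∀ μ : ℝ → ℝ, (∀ i ∈ Icc 0 n, 0 ≤ μ i) →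
      I μ = ∫⁻ i in Icc 0 n, ENNReal.ofReal ((A i ^ (σ - 1)) ^ (1 - e) * μ i ^ e) := fun μ hμ => by
    rw [hI]
    exact setLIntegral_congr_fun measurableSet_Icc fun i hi => by
      rw [mul_rpow_rpow_eq_rpow_one_sub_mul_rpow (hApos i hi).le (hμ i hi) hρ hρ0.ne']
  have hpos : ∀ᵐ i ∂volume.restrict (Icc 0 n), 0 < A i ^ (σ - 1) :=
    (ae_restrict_mem measurableSet_Icc).mono fun i hi => rpow_pos_of_pos (hApos i hi) _
  have hint : IntegrableOn (fun i => A i ^ (σ - 1)) (Icc 0 n) :=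
    integrableOn_rpow_of_le_of_nonpos measure_Icc_lt_top measurableSet_Icc hAmeas ha hAa
      (by linarith)
  have hS : 0 < ∫ i in Icc 0 n, A i ^ (σ - 1) :=
    setIntegral_pos_of_forall_mem_pos measurableSet_Icc (by simpa using hn) hint
      fun i hi => rpow_pos_of_pos (hApos i hi) _
  set S := ∫ i in Icc 0 n, A i ^ (σ - 1)
  have hμEQ' : μEQ = fun i => A i ^ (σ - 1) / S := funext hμEQ
  have hμEQnn : ∀ i ∈ Icc 0 n, 0 ≤ μEQ i := fun i hi => by
    rw [hμEQ]; exact (div_pos (rpow_pos_of_pos (hApos i hi) _) hS).le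
  refine ⟨?_, fun μ _ hμnn hμ1 hμpos => ?_⟩
  · rw [hX, hI' μEQ hμEQnn, hμEQ', lintegral_rpow_one_sub_mul_div_integral_rpow hint hpos hS,
      ENNReal.ofReal_rpow_of_pos (rpow_pos_of_pos hS _), ← rpow_mul hS.le]
    congr 2
    simp only [e]
    field_simp
    rw [hρ]
    ring
  have hμi : IntegrableOn μ (Icc 0 n) :=
    Integrable.of_integral_ne_zero (by rw [hμ1]; exact one_ne_zero)
  obtain ⟨hle, heq_iff⟩ :=
    lintegral_rpow_one_sub_mul_div_integral_rpow_le_and_eq_iff he hint hpos hS hμi hμpos hμ1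
  rw [hX, hX, hI' μ hμnn, hI' μEQ hμEQnn, hμEQ']
  exact ⟨hle, ENNReal.rpow_le_rpow_of_nonpos hle hexp.le,
    (ENNReal.rpow_left_injective hexp.ne).eq_iff.trans heq_iff⟩

/-- For 0 < σ < 1, aggregate consumption (defined with the
convention that an infinite integral gives X = 0, via `ℝ≥0∞`-valued
quantities) is maximized uniquely at the long-run equilibrium distribution
`μEQ i = A i ^ (σ-1) / ∫ A ^ (σ-1)`; the defining integral of X is
minimized at `μEQ`. -/
theorem statement1
    (n β σ ρ a b : ℝ)
    (hn : 0 < n) (hβ : β ∈ Set.Ioo (0:ℝ) 1) (hσ : σ ∈ Set.Ioo (0:ℝ) 1)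
    (hρ : ρ = σ * (1 - β) + β)
    (A : ℝ → ℝ) (hAmeas : Measurable A)
    (ha : 0 < a)
    (hAa : ∀ i ∈ Set.Icc (0:ℝ) n, a ≤ A i)
    (hAb : ∀ i ∈ Set.Icc (0:ℝ) n, A i ≤ b)
    (I : (ℝ → ℝ) → ℝ≥0∞)
    (hI : ∀ μ : ℝ → ℝ,
      I μ = ∫⁻ i in Set.Icc (0:ℝ) n,
        ENNReal.ofReal ((A i * μ i ^ (1 - β)) ^ ((σ - 1) / ρ)))
    (X : (ℝ → ℝ) → ℝ≥0∞)
    (hX : ∀ μ : ℝ → ℝ, X μ = I μ ^ (ρ / (σ - 1)))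
    (μEQ : ℝ → ℝ)
    (hμEQ : ∀ i, μEQ i = A i ^ (σ - 1) / ∫ j in Set.Icc (0:ℝ) n, A j ^ (σ - 1)) :
    X μEQ = ENNReal.ofReal
        ((∫ i in Set.Icc (0:ℝ) n, A i ^ (σ - 1)) ^ (1 / (σ - 1))) ∧
    ∀ μ : ℝ → ℝ, Measurable μ → (∀ i ∈ Set.Icc (0:ℝ) n, 0 ≤ μ i) →
      (∫ i in Set.Icc (0:ℝ) n, μ i) = 1 →
      (∀ᵐ i ∂(volume.restrict (Set.Icc (0:ℝ) n)), 0 < μ i) →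
      I μEQ ≤ I μ ∧
      X μ ≤ X μEQ ∧
      (X μ = X μEQ ↔ μ =ᵐ[volume.restrict (Set.Icc (0:ℝ) n)] μEQ) :=
  statement1_general n β σ ρ a hn hβ hσ hρ A hAmeas ha hAa I hI X hX μEQ hμEQ
end

section
/- In the long-run equilibrium of the baseline economy profit rates are equalized across sectors: if μ^EQ(i) := A(i)^{σ−1} / ∫₀ⁿ A(j)^{σ−1} dj, then the short-run profit rate evaluated at μ = μ^EQ equals π(i) = 1 − β for every i ∈ [0,n], and the corresponding aggregate consumption is X(μ^EQ) = (∫₀ⁿ A(i)^{σ−1} di)^{1/(σ−1)}. -/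
/-! Write `I = ∫ A ^ (σ - 1)`, which is positive and finite because `A` is bounded between
positive constants. Since `ρ = 1 + (σ - 1)(1 - β)`, at `μ = A ^ (σ - 1) / I` one has
`A μ ^ (1 - β) = I ^ (β - 1) A ^ ρ`, so the integrand of `X` becomes `I ^ (1/ρ - 1) A ^ (σ - 1)`
and integrates to `I ^ (1/ρ)`. The numerator of the profit rate is `(1 - β) I ^ (1/ρ)` for
every `i`, and `X = I ^ ((1/ρ) (ρ/(σ - 1)))`. -/

open MeasureTheory Set Real

section Integrability

variable {α : Type*} [MeasurableSpace α] {μ : Measure α} {s : Set α} {f : α → ℝ}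

theorem integrableOn_rpow_of_mapsTo_Icc {a b : ℝ} (ha : 0 < a) (hf : Measurable f)
    (hs : MeasurableSet s) (hμs : μ s ≠ ⊤) (hfs : MapsTo f s (Icc a b)) (p : ℝ) :
    IntegrableOn (fun x => f x ^ p) s μ := by
  have hcont : ContinuousOn (· ^ p) (Icc a b) :=
    continuousOn_id.rpow_const fun x hx => Or.inl (ha.trans_le hx.1).ne'
  obtain ⟨C, hC⟩ := isCompact_Icc.exists_bound_of_continuousOn hcont
  exact Measure.integrableOn_of_bounded hμs (hf.pow_const p).aestronglyMeasurable
    ((ae_restrict_iff' hs).2 (ae_of_all _ fun x hx => hC _ (hfs hx)))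

theorem setIntegral_pos_of_forall_pos (hs : MeasurableSet s) (hμs : μ s ≠ 0)
    (hfi : IntegrableOn f s μ) (hf : ∀ x ∈ s, 0 < f x) : 0 < ∫ x in s, f x ∂μ := by
  have hf_nonneg : 0 ≤ᵐ[μ.restrict s] f :=
    (ae_restrict_iff' hs).2 (ae_of_all _ fun x hx => (hf x hx).le)
  rw [setIntegral_pos_iff_support_of_nonneg_ae hf_nonneg hfi,
    inter_eq_right.2 fun x hx => Function.mem_support.2 (hf x hx).ne']
  exact pos_iff_ne_zero.2 hμs

end Integrability

section Equilibrium

variable {β σ ρ x I : ℝ}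

theorem equilibrium_output_rpow (hρ : ρ = σ * (1 - β) + β) (hρ0 : ρ ≠ 0) (hx : 0 < x)
    (hI : 0 < I) :
    (x * (x ^ (σ - 1) / I) ^ (1 - β)) ^ ((σ - 1) / ρ) = I ^ (1 / ρ - 1) * x ^ (σ - 1) := by
  have hbase : x * (x ^ (σ - 1) / I) ^ (1 - β) = I ^ (β - 1) * x ^ ρ := by
    rw [div_rpow (rpow_nonneg hx.le _) hI.le, ← rpow_mul hx.le, div_eq_mul_inv,
      ← rpow_neg hI.le, neg_sub, hρ]
    rw [show σ * (1 - β) + β = 1 + (σ - 1) * (1 - β) by ring, rpow_add hx, rpow_one]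
    ring
  rw [hbase, mul_rpow (rpow_nonneg hI.le _) (rpow_nonneg hx.le _), ← rpow_mul hI.le,
    ← rpow_mul hx.le, mul_div_cancel₀ _ hρ0]
  congr 2
  rw [hρ] at hρ0 ⊢
  field_simp
  ring

theorem equilibrium_profit_numerator (p : ℝ) (hx : 0 < x) (hI : 0 ≤ I) :
    x ^ (p / ρ) * (x ^ p / I) ^ (-(1 / ρ)) = I ^ (1 / ρ) := by
  rw [div_rpow (rpow_nonneg hx.le _) hI, ← rpow_mul hx.le, rpow_neg hI, div_inv_eq_mul,
    ← mul_assoc, ← rpow_add hx, show p / ρ + p * -(1 / ρ) = 0 by ring, rpow_zero, one_mul]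

end Equilibrium

theorem statement2_general
    (n β σ ρ a b : ℝ)
    (hn : 0 < n) (hβ : β ∈ Set.Ioo (0:ℝ) 1) (hσpos : 0 < σ)
    (hρ : ρ = σ * (1 - β) + β)
    (A : ℝ → ℝ) (hAmeas : Measurable A)
    (ha : 0 < a)
    (hAa : ∀ i ∈ Set.Icc (0:ℝ) n, a ≤ A i)
    (hAb : ∀ i ∈ Set.Icc (0:ℝ) n, A i ≤ b)
    (μEQ : ℝ → ℝ)
    (hμEQ : ∀ i, μEQ i = A i ^ (σ - 1) / ∫ j in Set.Icc (0:ℝ) n, A j ^ (σ - 1)) :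
    (∀ i ∈ Set.Icc (0:ℝ) n,
      (1 - β) * A i ^ ((σ - 1) / ρ) * μEQ i ^ (-(1 / ρ)) /
        (∫ j in Set.Icc (0:ℝ) n, (A j * μEQ j ^ (1 - β)) ^ ((σ - 1) / ρ))
      = 1 - β) ∧
    (∫ i in Set.Icc (0:ℝ) n, (A i * μEQ i ^ (1 - β)) ^ ((σ - 1) / ρ)) ^ (ρ / (σ - 1))
      = (∫ i in Set.Icc (0:ℝ) n, A i ^ (σ - 1)) ^ (1 / (σ - 1)) := by
  have hρ0 : ρ ≠ 0 := by
    have : 0 < 1 - β := sub_pos.2 hβ.2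
    rw [hρ]; exact (add_pos (mul_pos hσpos this) hβ.1).ne'
  have hA : ∀ i ∈ Icc 0 n, 0 < A i := fun i hi => ha.trans_le (hAa i hi)
  have hint : IntegrableOn (fun i => A i ^ (σ - 1)) (Icc 0 n) :=
    integrableOn_rpow_of_mapsTo_Icc ha hAmeas measurableSet_Icc (by simp [volume_Icc])
      (fun i hi => ⟨hAa i hi, hAb i hi⟩) (σ - 1)
  set I := ∫ j in Icc 0 n, A j ^ (σ - 1)
  have hI : 0 < I := setIntegral_pos_of_forall_pos measurableSet_Icc (by simp [volume_Icc, hn])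
    hint fun i hi => rpow_pos_of_pos (hA i hi) _
  have hJ : ∫ i in Icc 0 n, (A i * μEQ i ^ (1 - β)) ^ ((σ - 1) / ρ) = I ^ (1 / ρ) := by
    rw [setIntegral_congr_fun measurableSet_Icc fun i hi => by
        rw [hμEQ, equilibrium_output_rpow hρ hρ0 (hA i hi) hI],
      integral_const_mul, ← rpow_add_one hI.ne', sub_add_cancel]
  refine ⟨fun i hi => ?_, ?_⟩
  · rw [hJ, hμEQ, mul_assoc, equilibrium_profit_numerator _ (hA i hi) hI.le,
      mul_div_cancel_right₀ _ (rpow_pos_of_pos hI _).ne']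
  · rw [hJ, ← rpow_mul hI.le]
    congr 1
    field_simp

/-- In the long-run equilibrium of the baseline economy profit
rates are equalized across sectors: at `μEQ i = A i ^ (σ-1) / ∫ A ^ (σ-1)`,
the short-run profit rate equals `1 - β` for every `i ∈ [0,n]`, and aggregate
consumption equals `(∫ A ^ (σ-1)) ^ (1/(σ-1))`. -/
theorem statement2
    (n β σ ρ a b : ℝ)
    (hn : 0 < n) (hβ : β ∈ Set.Ioo (0:ℝ) 1) (hσpos : 0 < σ) (hσne : σ ≠ 1)
    (hρ : ρ = σ * (1 - β) + β)
    (A : ℝ → ℝ) (hAmeas : Measurable A)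
    (ha : 0 < a)
    (hAa : ∀ i ∈ Set.Icc (0:ℝ) n, a ≤ A i)
    (hAb : ∀ i ∈ Set.Icc (0:ℝ) n, A i ≤ b)
    (μEQ : ℝ → ℝ)
    (hμEQ : ∀ i, μEQ i = A i ^ (σ - 1) / ∫ j in Set.Icc (0:ℝ) n, A j ^ (σ - 1)) :
    (∀ i ∈ Set.Icc (0:ℝ) n,
      (1 - β) * A i ^ ((σ - 1) / ρ) * μEQ i ^ (-(1 / ρ)) /
        (∫ j in Set.Icc (0:ℝ) n, (A j * μEQ j ^ (1 - β)) ^ ((σ - 1) / ρ))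
      = 1 - β) ∧
    (∫ i in Set.Icc (0:ℝ) n, (A i * μEQ i ^ (1 - β)) ^ ((σ - 1) / ρ)) ^ (ρ / (σ - 1))
      = (∫ i in Set.Icc (0:ℝ) n, A i ^ (σ - 1)) ^ (1 / (σ - 1)) :=
  statement2_general n β σ ρ a b hn hβ hσpos hρ A hAmeas ha hAa hAb μEQ hμEQ
end

section
/- At the short-run equilibrium prices every goods market clears: for every measurable firm distribution μ with 1/M ≤ μ(i) ≤ M for some M > 1, with J := ∫₀ⁿ (A(i)^{1/(1−β)} μ(i))^{(ρ−1)/ρ} di, p(i) := J^{−(1−β)} (A(i)^{1/(1−β)} μ(i))^{−(1−β)/ρ}, P := J^{ρ/(1−σ)}, wage w = β and aggregate income Y = 1, the consumer demand for good i equals the aggregate profit-maximizing supply of sector i; explicitly, p(i)^{−σ} P^{σ−1} = μ(i) · β^{β/(1−β)} A(i)^{1/(1−β)} p(i)^{β/(1−β)} w^{−β/(1−β)} = μ(i) A(i)^{1/(1−β)} p(i)^{β/(1−β)} for every i ∈ [0,n]. -/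
open MeasureTheory Set Real

/-! The index `B i := A i ^ (1/(1-β)) * μ i` is bounded above and away from zero on `[0,n]`,
hence so is every real power of it, and its integral `J` is positive. For positive `J` and
`B i` both sides of the market-clearing equation are monomials `J ^ r * B i ^ s`, and the
exponents agree precisely because `ρ = σ(1-β) + β`; the wage factor
`β ^ (β/(1-β)) * w ^ (-(β/(1-β)))` equals `1` at `w = β`. -/

def IsPosBoundedOn {α : Type*} (f : α → ℝ) (s : Set α) : Prop :=
  ∃ c C : ℝ, 0 < c ∧ ∀ x ∈ s, f x ∈ Icc c C

namespace IsPosBoundedOn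

variable {α : Type*} {f g : α → ℝ} {s : Set α}

theorem of_le {c C : ℝ} (hc : 0 < c) (hlo : ∀ x ∈ s, c ≤ f x)
    (hhi : ∀ x ∈ s, f x ≤ C) : IsPosBoundedOn f s :=
  ⟨c, C, hc, fun x hx => ⟨hlo x hx, hhi x hx⟩⟩

theorem pos (hf : IsPosBoundedOn f s) {x : α} (hx : x ∈ s) : 0 < f x := by
  obtain ⟨c, C, hc, hbd⟩ := hf
  exact hc.trans_le (hbd x hx).1

theorem mul (hf : IsPosBoundedOn f s) (hg : IsPosBoundedOn g s) :
    IsPosBoundedOn (fun x => f x * g x) s := by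
  obtain ⟨c, C, hc, hf⟩ := hf
  obtain ⟨d, D, hd, hg⟩ := hg
  refine of_le (mul_pos hc hd) (C := C * D) (fun x hx => ?_) (fun x hx => ?_)
  · exact mul_le_mul (hf x hx).1 (hg x hx).1 hd.le (hc.le.trans (hf x hx).1)
  · exact mul_le_mul (hf x hx).2 (hg x hx).2 (hd.le.trans (hg x hx).1)
      ((hc.le.trans (hf x hx).1).trans (hf x hx).2)

theorem rpow (hf : IsPosBoundedOn f s) (e : ℝ) : IsPosBoundedOn (fun x => f x ^ e) s := by
  obtain ⟨c, C, hc, hf⟩ := hf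
  have hC : 0 < max c C := lt_max_of_lt_left hc
  refine of_le (lt_min (rpow_pos_of_pos hc e) (rpow_pos_of_pos hC e))
    (C := max (c ^ e) (max c C ^ e)) (fun x hx => ?_) (fun x hx => ?_)
  all_goals
    obtain ⟨hcx, hxC⟩ := hf x hx
    replace hxC : f x ≤ max c C := hxC.trans (le_max_right c C)
    rcases le_total 0 e with he | he
  · exact (min_le_left _ _).trans (rpow_le_rpow hc.le hcx he)
  · exact (min_le_right _ _).trans (rpow_le_rpow_of_nonpos (hc.trans_le hcx) hxC he)
  · exact (rpow_le_rpow (hc.le.trans hcx) hxC he).trans (le_max_right _ _)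
  · exact (rpow_le_rpow_of_nonpos hc hcx he).trans (le_max_left _ _)

theorem setIntegral_pos [MeasurableSpace α] {μ : Measure α} (hf : IsPosBoundedOn f s)
    (hs : MeasurableSet s) (hμ0 : μ s ≠ 0) (hμ : μ s ≠ ⊤)
    (hfm : AEStronglyMeasurable f (μ.restrict s)) :
    0 < ∫ x in s, f x ∂μ := by
  obtain ⟨c, C, hc, hbd⟩ := hf
  have hint : IntegrableOn f s μ := by
    refine ⟨hfm, .restrict_of_bounded (C := C) hμ.lt_top ?_⟩
    rw [ae_restrict_iff' hs]
    exact Filter.Eventually.of_forall fun x hx => by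
      rw [Real.norm_eq_abs, abs_of_pos (hc.trans_le (hbd x hx).1)]
      exact (hbd x hx).2
  calc 0 < μ.real s • c := smul_pos (ENNReal.toReal_pos hμ0 hμ) hc
    _ ≤ ∫ x in s, f x ∂μ := setIntegral_ge_of_const_le hs hμ (fun x hx => (hbd x hx).1) hint

end IsPosBoundedOn

theorem ces_demand_eq_supply {β σ ρ J B : ℝ} (hJ : 0 < J) (hB : 0 < B)
    (hβ : β ≠ 1) (hσ : σ ≠ 1) (hρ : ρ = σ * (1 - β) + β) (hρ0 : ρ ≠ 0) :
    (J ^ (-(1 - β)) * B ^ (-((1 - β) / ρ))) ^ (-σ) * (J ^ (ρ / (1 - σ))) ^ (σ - 1)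
      = B * (J ^ (-(1 - β)) * B ^ (-((1 - β) / ρ))) ^ (β / (1 - β)) := by
  have h1β : 1 - β ≠ 0 := sub_ne_zero.mpr hβ.symm
  have h1σ : 1 - σ ≠ 0 := sub_ne_zero.mpr hσ.symm
  have hJexp : -(1 - β) * -σ + ρ / (1 - σ) * (σ - 1) = -(1 - β) * (β / (1 - β)) := by
    rw [hρ]; field_simp; ring
  have hBexp : -((1 - β) / ρ) * -σ = 1 + -((1 - β) / ρ) * (β / (1 - β)) := by
    field_simp
    linear_combination -hρ
  simp only [mul_rpow (rpow_nonneg hJ.le _) (rpow_nonneg hB.le _), ← rpow_mul hJ.le,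
    ← rpow_mul hB.le]
  calc J ^ (-(1 - β) * -σ) * B ^ (-((1 - β) / ρ) * -σ) * J ^ (ρ / (1 - σ) * (σ - 1))
      = J ^ (-(1 - β) * -σ + ρ / (1 - σ) * (σ - 1)) * B ^ (-((1 - β) / ρ) * -σ) := by
        rw [rpow_add hJ]; ring
    _ = B * (J ^ (-(1 - β) * (β / (1 - β))) * B ^ (-((1 - β) / ρ) * (β / (1 - β)))) := by
        rw [hJexp, hBexp, rpow_add hB, rpow_one]; ring

theorem statement5_general
    (n β σ ρ a b M : ℝ)
    (hn : 0 < n) (hβ : β ∈ Set.Ioo (0:ℝ) 1) (hσpos : 0 < σ) (hσne : σ ≠ 1)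
    (hρ : ρ = σ * (1 - β) + β)
    (A : ℝ → ℝ) (hAmeas : Measurable A)
    (ha : 0 < a)
    (hAa : ∀ i ∈ Set.Icc (0:ℝ) n, a ≤ A i)
    (hAb : ∀ i ∈ Set.Icc (0:ℝ) n, A i ≤ b)
    (hM : 1 < M)
    (μ : ℝ → ℝ) (hμmeas : Measurable μ)
    (hμlb : ∀ i ∈ Set.Icc (0:ℝ) n, 1 / M ≤ μ i)
    (hμub : ∀ i ∈ Set.Icc (0:ℝ) n, μ i ≤ M)
    (J : ℝ)
    (hJ : J = ∫ i in Set.Icc (0:ℝ) n, (A i ^ (1 / (1 - β)) * μ i) ^ ((ρ - 1) / ρ))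
    (p : ℝ → ℝ)
    (hp : ∀ i, p i = J ^ (-(1 - β)) * (A i ^ (1 / (1 - β)) * μ i) ^ (-((1 - β) / ρ)))
    (P : ℝ) (hP : P = J ^ (ρ / (1 - σ)))
    (w : ℝ) (hw : w = β)
    (Y : ℝ) (hY : Y = 1) :
    ∀ i ∈ Set.Icc (0:ℝ) n,
      Y * p i ^ (-σ) * P ^ (σ - 1)
        = μ i * (β ^ (β / (1 - β)) * A i ^ (1 / (1 - β)) * p i ^ (β / (1 - β))
            * w ^ (-(β / (1 - β)))) ∧
      Y * p i ^ (-σ) * P ^ (σ - 1)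
        = μ i * (A i ^ (1 / (1 - β)) * p i ^ (β / (1 - β))) := by
  obtain ⟨hβ0, hβ1⟩ := hβ
  have hρpos : 0 < ρ := hρ ▸ add_pos (mul_pos hσpos (sub_pos.mpr hβ1)) hβ0
  have hB : IsPosBoundedOn (fun i => A i ^ (1 / (1 - β)) * μ i) (Icc 0 n) :=
    ((IsPosBoundedOn.of_le ha hAa hAb).rpow _).mul
      (.of_le (one_div_pos.mpr (zero_lt_one.trans hM)) hμlb hμub)
  have hJpos : 0 < J := hJ ▸ (hB.rpow _).setIntegral_pos measurableSet_Icc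
    (by simp [hn]) (by simp)
    ((((hAmeas.pow_const _).mul hμmeas).pow_const _).aestronglyMeasurable)
  intro i hi
  have hclear : Y * p i ^ (-σ) * P ^ (σ - 1)
      = μ i * (A i ^ (1 / (1 - β)) * p i ^ (β / (1 - β))) := by
    rw [hY, one_mul, hP, hp, ces_demand_eq_supply hJpos (hB.pos hi) hβ1.ne hσne hρ hρpos.ne']
    ring
  refine ⟨?_, hclear⟩
  rw [hclear, hw, mul_right_comm _ _ (β ^ _), mul_right_comm (β ^ _), ← rpow_add hβ0,
    add_neg_cancel, rpow_zero, one_mul]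

/-- At the short-run equilibrium prices every goods market
clears: with `J`, `p`, `P` as in the short-run equilibrium, wage `w = β` and
aggregate income `Y = 1`, consumer demand for good `i` equals the aggregate
profit-maximizing supply of sector `i`:
`p i ^ (-σ) * P ^ (σ-1) = μ i * β^{β/(1-β)} A i^{1/(1-β)} p i^{β/(1-β)} w^{-β/(1-β)}
  = μ i * A i^{1/(1-β)} p i^{β/(1-β)}` for every `i ∈ [0,n]`. -/
theorem statement5
    (n β σ ρ a b M : ℝ)
    (hn : 0 < n) (hβ : β ∈ Set.Ioo (0:ℝ) 1) (hσpos : 0 < σ) (hσne : σ ≠ 1)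
    (hρ : ρ = σ * (1 - β) + β)
    (A : ℝ → ℝ) (hAmeas : Measurable A)
    (ha : 0 < a)
    (hAa : ∀ i ∈ Set.Icc (0:ℝ) n, a ≤ A i)
    (hAb : ∀ i ∈ Set.Icc (0:ℝ) n, A i ≤ b)
    (hM : 1 < M)
    (μ : ℝ → ℝ) (hμmeas : Measurable μ)
    (hμlb : ∀ i ∈ Set.Icc (0:ℝ) n, 1 / M ≤ μ i)
    (hμub : ∀ i ∈ Set.Icc (0:ℝ) n, μ i ≤ M)
    (hμint : (∫ i in Set.Icc (0:ℝ) n, μ i) = 1)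
    (J : ℝ)
    (hJ : J = ∫ i in Set.Icc (0:ℝ) n, (A i ^ (1 / (1 - β)) * μ i) ^ ((ρ - 1) / ρ))
    (p : ℝ → ℝ)
    (hp : ∀ i, p i = J ^ (-(1 - β)) * (A i ^ (1 / (1 - β)) * μ i) ^ (-((1 - β) / ρ)))
    (P : ℝ) (hP : P = J ^ (ρ / (1 - σ)))
    (w : ℝ) (hw : w = β)
    (Y : ℝ) (hY : Y = 1) :
    ∀ i ∈ Set.Icc (0:ℝ) n,
      Y * p i ^ (-σ) * P ^ (σ - 1)
        = μ i * (β ^ (β / (1 - β)) * A i ^ (1 / (1 - β)) * p i ^ (β / (1 - β))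
            * w ^ (-(β / (1 - β)))) ∧
      Y * p i ^ (-σ) * P ^ (σ - 1)
        = μ i * (A i ^ (1 / (1 - β)) * p i ^ (β / (1 - β))) :=
  statement5_general n β σ ρ a b M hn hβ hσpos hσne hρ A hAmeas ha hAa hAb hM μ hμmeas hμlb hμub J
    hJ p hp P hP w hw Y hY
end

section
/- Let 0 < σ < 1, β ∈ (0,1), and η ∈ ℝ with 1 − η(σ−1) > 0 and 1 + (β−η)(σ−1) > 0, so that γ_A := (σ−1)/(1−η(σ−1)) < 0 and γ_B := (σ−1)/(1+(β−η)(σ−1)) < 0. Let A₀, L : [0,n] → ℝ be measurable with 0 < a ≤ A₀(i), L(i) ≤ b and ∫₀ⁿ L(i) di = 1. Then (∫₀ⁿ A₀(i)^{γ_B} L(i)^{β γ_B} di)^{1/γ_B} ≤ (∫₀ⁿ A₀(i)^{γ_A} di)^{1/γ_A}, with equality if and only if L(i) = A₀(i)^{γ_A} / ∫₀ⁿ A₀(k)^{γ_A} dk almost everywhere. -/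
/-!
Put `p = γB / γA` and `h = A₀ ^ γA / L`. The exponents satisfy `p + β γB = 1` and `p > 1`, so
`∫ A₀ ^ γA = ∫ L h` and `∫ A₀ ^ γB L ^ (β γB) = ∫ L h ^ p`. Since `∫ L = 1`, Jensen's inequality
for the strictly convex `t ↦ t ^ p` gives `(∫ A₀ ^ γA) ^ p ≤ ∫ A₀ ^ γB L ^ (β γB)`, with equality
iff `h` is a.e. constant, i.e. iff `L` is proportional to `A₀ ^ γA`. Integrating the tangent line
of `t ↦ t ^ p` at the mean `∫ L h` proves Jensen together with its equality case. Raising both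
sides to the negative power `1 / γB` reverses the inequality.
-/

open MeasureTheory Set Real

noncomputable def rpowTangentGap (p m t : ℝ) : ℝ := t ^ p - (m ^ p + p * m ^ (p - 1) * (t - m))

theorem rpowTangentGap_pos {p m t : ℝ} (hp : 1 < p) (hm : 0 ≤ m) (ht : 0 ≤ t) (hne : t ≠ m) :
    0 < rpowTangentGap p m t := by
  rw [rpowTangentGap, sub_pos]
  rcases hm.eq_or_lt with rfl | hm
  · rw [zero_rpow (by linarith), zero_rpow (by linarith), mul_zero, zero_mul, zero_add]
    exact rpow_pos_of_pos (ht.lt_of_ne' hne) p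
  have hbern := one_add_mul_self_lt_rpow_one_add (s := t / m - 1)
    (by linarith [div_nonneg ht hm.le]) (by rwa [sub_ne_zero, ne_eq, div_eq_one_iff_eq hm.ne']) hp
  rw [add_sub_cancel, div_rpow ht hm.le, lt_div_iff₀ (rpow_pos_of_pos hm p)] at hbern
  calc m ^ p + p * m ^ (p - 1) * (t - m) = (1 + p * (t / m - 1)) * m ^ p := by
        rw [rpow_sub_one hm.ne']; field_simp
    _ < t ^ p := hbern

theorem rpowTangentGap_self (p m : ℝ) : rpowTangentGap p m m = 0 := by
  simp [rpowTangentGap]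

theorem rpowTangentGap_nonneg {p m t : ℝ} (hp : 1 < p) (hm : 0 ≤ m) (ht : 0 ≤ t) :
    0 ≤ rpowTangentGap p m t := by
  rcases eq_or_ne t m with rfl | hne
  · exact (rpowTangentGap_self p t).ge
  · exact (rpowTangentGap_pos hp hm ht hne).le

theorem rpowTangentGap_eq_zero_iff {p m t : ℝ} (hp : 1 < p) (hm : 0 ≤ m) (ht : 0 ≤ t) :
    rpowTangentGap p m t = 0 ↔ t = m :=
  ⟨fun h => by_contra fun hne => (rpowTangentGap_pos hp hm ht hne).ne' h,
    fun h => h ▸ rpowTangentGap_self p m⟩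

theorem mul_rpowTangentGap_eq (p m w t : ℝ) :
    w * rpowTangentGap p m t
      = (w * t ^ p - (m ^ p - p * m ^ (p - 1) * m) * w) - p * m ^ (p - 1) * (w * t) := by
  rw [rpowTangentGap]; ring

section Jensen

variable {α : Type*} [MeasurableSpace α] {μ : Measure α} {w f : α → ℝ} {p m : ℝ}

theorem integrable_mul_rpowTangentGap (hw : Integrable w μ)
    (hwf : Integrable (fun x => w x * f x) μ) (hwfp : Integrable (fun x => w x * f x ^ p) μ) :
    Integrable (fun x => w x * rpowTangentGap p m (f x)) μ := by
  simp only [mul_rpowTangentGap_eq]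
  exact (hwfp.sub (hw.const_mul _)).sub (hwf.const_mul _)

theorem integral_mul_rpowTangentGap (hw : ∫ x, w x ∂μ = 1) (hm : ∫ x, w x * f x ∂μ = m)
    (hwf : Integrable (fun x => w x * f x) μ) (hwfp : Integrable (fun x => w x * f x ^ p) μ) :
    ∫ x, w x * rpowTangentGap p m (f x) ∂μ = ∫ x, w x * f x ^ p ∂μ - m ^ p := by
  have hwi : Integrable w μ := .of_integral_ne_zero (by simp [hw])
  have hwfp' : Integrable (fun x => w x * f x ^ p - (m ^ p - p * m ^ (p - 1) * m) * w x) μ :=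
    hwfp.sub (hwi.const_mul _)
  simp only [mul_rpowTangentGap_eq]
  rw [integral_sub hwfp' (hwf.const_mul _), integral_sub hwfp (hwi.const_mul _),
    integral_const_mul, integral_const_mul, hw, hm]
  ring

theorem rpow_integral_mul_le_and_eq_iff (hp : 1 < p) (hw_pos : ∀ᵐ x ∂μ, 0 < w x)
    (hf : ∀ᵐ x ∂μ, 0 ≤ f x) (hw : ∫ x, w x ∂μ = 1)
    (hwf : Integrable (fun x => w x * f x) μ) (hwfp : Integrable (fun x => w x * f x ^ p) μ) :
    (∫ x, w x * f x ∂μ) ^ p ≤ ∫ x, w x * f x ^ p ∂μ ∧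
      ((∫ x, w x * f x ∂μ) ^ p = ∫ x, w x * f x ^ p ∂μ ↔
        f =ᵐ[μ] fun _ => ∫ x, w x * f x ∂μ) := by
  set m := ∫ x, w x * f x ∂μ with hm
  have hm0 : 0 ≤ m := integral_nonneg_of_ae <| by
    filter_upwards [hw_pos, hf] with x hwx hfx using mul_nonneg hwx.le hfx
  have hgap := integral_mul_rpowTangentGap hw hm.symm hwf hwfp
  have hgap_nonneg : 0 ≤ᵐ[μ] fun x => w x * rpowTangentGap p m (f x) := by
    filter_upwards [hw_pos, hf] with x hwx hfx
    exact mul_nonneg hwx.le (rpowTangentGap_nonneg hp hm0 hfx)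
  have hgap_int : Integrable (fun x => w x * rpowTangentGap p m (f x)) μ :=
    integrable_mul_rpowTangentGap (.of_integral_ne_zero (by simp [hw])) hwf hwfp
  refine ⟨sub_nonneg.1 (hgap ▸ integral_nonneg_of_ae hgap_nonneg), ?_⟩
  rw [eq_comm, ← sub_eq_zero, ← hgap, integral_eq_zero_iff_of_nonneg_ae hgap_nonneg hgap_int]
  refine Filter.eventually_congr ?_
  filter_upwards [hw_pos, hf] with x hwx hfx
  rw [Pi.zero_apply, mul_eq_zero, or_iff_right hwx.ne', rpowTangentGap_eq_zero_iff hp hm0 hfx]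

end Jensen

theorem rpow_one_div_le_and_eq_iff_of_rpow_div_le {X Y γA γB : ℝ} (hX : 0 < X) (hγA : γA ≠ 0)
    (hγB : γB < 0) (h : X ^ (γB / γA) ≤ Y) :
    Y ^ (1 / γB) ≤ X ^ (1 / γA) ∧ (Y ^ (1 / γB) = X ^ (1 / γA) ↔ X ^ (γB / γA) = Y) := by
  have hXp : (X ^ (γB / γA)) ^ (1 / γB) = X ^ (1 / γA) := by
    rw [← rpow_mul hX.le]; congr 1; field_simp [hγB.ne]
  have hXp_pos : 0 < X ^ (γB / γA) := rpow_pos_of_pos hX _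
  rw [← hXp, rpow_left_inj (hXp_pos.le.trans h) hXp_pos.le (one_div_neg.2 hγB).ne, eq_comm]
  exact ⟨rpow_le_rpow_of_nonpos hXp_pos h (one_div_neg.2 hγB).le, Iff.rfl⟩

section ReverseHolder

variable {α : Type*} [MeasurableSpace α] {ν : Measure α} {A L : α → ℝ} {a β γA γB : ℝ}

theorem integral_pos_of_ae_pos {f : α → ℝ} (hν : ν ≠ 0) (hf : ∀ᵐ x ∂ν, 0 < f x)
    (hfi : Integrable f ν) : 0 < ∫ x, f x ∂ν := by
  rw [integral_pos_iff_support_of_nonneg_ae (hf.mono fun _ => le_of_lt) hfi,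
    measure_congr (Filter.eventuallyEq_univ.2 (hf.mono fun _ hx => hx.ne') :
      Function.support f =ᵐ[ν] univ)]
  exact Measure.measure_univ_pos.2 hν

theorem ae_norm_rpow_le {γ : ℝ} (ha : 0 < a) (hAa : ∀ᵐ x ∂ν, a ≤ A x) (hγ : γ ≤ 0) :
    ∀ᵐ x ∂ν, ‖A x ^ γ‖ ≤ a ^ γ := by
  filter_upwards [hAa] with x hx
  rw [norm_of_nonneg (rpow_nonneg (ha.le.trans hx) γ)]
  exact rpow_le_rpow_of_nonpos ha hx hγ

theorem integrable_rpow_of_le [IsFiniteMeasure ν] {γ : ℝ} (hA : Measurable A) (ha : 0 < a)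
    (hAa : ∀ᵐ x ∂ν, a ≤ A x) (hγ : γ ≤ 0) : Integrable (fun x => A x ^ γ) ν :=
  .of_bound (hA.pow_const γ).aestronglyMeasurable _ (ae_norm_rpow_le ha hAa hγ)

theorem mul_div_rpow_eq {A l : ℝ} (hA : 0 < A) (hl : 0 < l) (hγA : γA ≠ 0)
    (hsum : γB / γA + β * γB = 1) : l * (A ^ γA / l) ^ (γB / γA) = A ^ γB * l ^ (β * γB) := by
  rw [div_rpow (rpow_nonneg hA.le _) hl.le, ← rpow_mul hA.le, mul_div_assoc', mul_comm l,
    mul_div_assoc, mul_div_cancel₀ _ hγA]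
  congr 1
  rw [div_eq_iff (rpow_pos_of_pos hl _).ne', ← rpow_add hl, add_comm, hsum, rpow_one]

theorem rpow_integral_rpow_mul_rpow_le_and_eq_iff [IsFiniteMeasure ν] (hA : Measurable A)
    (hL : Measurable L) (ha : 0 < a) (hAa : ∀ᵐ x ∂ν, a ≤ A x) (hLa : ∀ᵐ x ∂ν, a ≤ L x)
    (hL1 : ∫ x, L x ∂ν = 1) (hγA : γA < 0) (hp : 1 < γB / γA) (hsum : γB / γA + β * γB = 1) :
    (∫ x, A x ^ γB * L x ^ (β * γB) ∂ν) ^ (1 / γB) ≤ (∫ x, A x ^ γA ∂ν) ^ (1 / γA) ∧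
      ((∫ x, A x ^ γB * L x ^ (β * γB) ∂ν) ^ (1 / γB) = (∫ x, A x ^ γA ∂ν) ^ (1 / γA) ↔
        L =ᵐ[ν] fun x => A x ^ γA / ∫ x, A x ^ γA ∂ν) := by
  have hγB : γB < 0 := ((one_lt_div_of_neg hγA).1 hp).trans hγA
  have hApos : ∀ᵐ x ∂ν, 0 < A x := hAa.mono fun _ hx => ha.trans_le hx
  have hLpos : ∀ᵐ x ∂ν, 0 < L x := hLa.mono fun _ hx => ha.trans_le hx
  have hXint : Integrable (fun x => A x ^ γA) ν := integrable_rpow_of_le hA ha hAa hγA.le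
  have hYint : Integrable (fun x => A x ^ γB * L x ^ (β * γB)) ν :=
    (integrable_rpow_of_le hL ha hLa (by linarith)).bdd_mul
      (hA.pow_const γB).aestronglyMeasurable (ae_norm_rpow_le ha hAa hγB.le)
  have hLf : (fun x => L x * (A x ^ γA / L x)) =ᵐ[ν] fun x => A x ^ γA := by
    filter_upwards [hLpos] with x hx using mul_div_cancel₀ _ hx.ne'
  have hLfp : (fun x => L x * (A x ^ γA / L x) ^ (γB / γA))
      =ᵐ[ν] fun x => A x ^ γB * L x ^ (β * γB) := by
    filter_upwards [hApos, hLpos] with x hAx hLx using mul_div_rpow_eq hAx hLx hγA.ne hsum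
  have hf : ∀ᵐ x ∂ν, 0 ≤ A x ^ γA / L x := by
    filter_upwards [hApos, hLpos] with x hAx hLx using div_nonneg (rpow_nonneg hAx.le _) hLx.le
  obtain ⟨hle, heq⟩ := rpow_integral_mul_le_and_eq_iff hp hLpos hf hL1
    (hXint.congr hLf.symm) (hYint.congr hLfp.symm)
  rw [integral_congr_ae hLf, integral_congr_ae hLfp] at hle heq
  have hXpos : 0 < ∫ x, A x ^ γA ∂ν := integral_pos_of_ae_pos (by rintro rfl; simp at hL1)
    (hApos.mono fun x hx => rpow_pos_of_pos hx _) hXint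
  obtain ⟨hpow_le, hpow_eq⟩ := rpow_one_div_le_and_eq_iff_of_rpow_div_le hXpos hγA.ne hγB hle
  refine ⟨hpow_le, hpow_eq.trans (heq.trans (Filter.eventually_congr ?_))⟩
  filter_upwards [hLpos] with x hx
  rw [div_eq_iff hx.ne', eq_div_iff hXpos.ne', eq_comm, mul_comm]

end ReverseHolder

theorem div_add_mul_eq_one {β σ η γA γB : ℝ} (hσ : σ ≠ 1) (hη : 1 + (β - η) * (σ - 1) ≠ 0)
    (hγA : γA = (σ - 1) / (1 - η * (σ - 1))) (hγB : γB = (σ - 1) / (1 + (β - η) * (σ - 1))) :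
    γB / γA + β * γB = 1 := by
  rw [hγA, hγB, div_div_div_cancel_left' _ _ (sub_ne_zero.2 hσ), mul_div_assoc', ← add_div,
    div_eq_one_iff_eq hη]
  ring

theorem statement8_general
    (n β σ η γA γB a : ℝ)
    (hβ : β ∈ Set.Ioo (0:ℝ) 1) (hσ : σ ∈ Set.Ioo (0:ℝ) 1)
    (hη1 : 0 < 1 - η * (σ - 1)) (hη2 : 0 < 1 + (β - η) * (σ - 1))
    (hγA : γA = (σ - 1) / (1 - η * (σ - 1)))
    (hγB : γB = (σ - 1) / (1 + (β - η) * (σ - 1)))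
    (A₀ L : ℝ → ℝ) (hA₀meas : Measurable A₀) (hLmeas : Measurable L)
    (ha : 0 < a)
    (hA₀a : ∀ i ∈ Set.Icc (0:ℝ) n, a ≤ A₀ i)
    (hLa : ∀ i ∈ Set.Icc (0:ℝ) n, a ≤ L i)
    (hLint : (∫ i in Set.Icc (0:ℝ) n, L i) = 1) :
    γA < 0 ∧ γB < 0 ∧
    (∫ i in Set.Icc (0:ℝ) n, A₀ i ^ γB * L i ^ (β * γB)) ^ (1 / γB)
      ≤ (∫ i in Set.Icc (0:ℝ) n, A₀ i ^ γA) ^ (1 / γA) ∧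
    ((∫ i in Set.Icc (0:ℝ) n, A₀ i ^ γB * L i ^ (β * γB)) ^ (1 / γB)
        = (∫ i in Set.Icc (0:ℝ) n, A₀ i ^ γA) ^ (1 / γA)
      ↔ L =ᵐ[volume.restrict (Set.Icc (0:ℝ) n)]
          fun i => A₀ i ^ γA / ∫ k in Set.Icc (0:ℝ) n, A₀ k ^ γA) := by
  have hγA_neg : γA < 0 := hγA ▸ div_neg_of_neg_of_pos (by linarith [hσ.2]) hη1
  have hγB_neg : γB < 0 := hγB ▸ div_neg_of_neg_of_pos (by linarith [hσ.2]) hη2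
  have hsum : γB / γA + β * γB = 1 := div_add_mul_eq_one hσ.2.ne hη2.ne' hγA hγB
  have hp : 1 < γB / γA := by linarith [mul_neg_of_pos_of_neg hβ.1 hγB_neg]
  exact ⟨hγA_neg, hγB_neg, rpow_integral_rpow_mul_rpow_le_and_eq_iff hA₀meas hLmeas ha
    (ae_restrict_of_forall_mem measurableSet_Icc hA₀a)
    (ae_restrict_of_forall_mem measurableSet_Icc hLa) hLint hγA_neg hp hsum⟩

/-- (0 < σ < 1 case, via reverse Hölder.) With
`γ_A = (σ-1)/(1-η(σ-1)) < 0` and `γ_B = (σ-1)/(1+(β-η)(σ-1)) < 0`, one has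
`(∫ A₀^{γ_B} L^{β γ_B})^{1/γ_B} ≤ (∫ A₀^{γ_A})^{1/γ_A}`, with equality iff
`L(i) = A₀(i)^{γ_A} / ∫ A₀^{γ_A}` almost everywhere. -/
theorem statement8
    (n β σ η γA γB a b : ℝ)
    (hn : 0 < n) (hβ : β ∈ Set.Ioo (0:ℝ) 1) (hσ : σ ∈ Set.Ioo (0:ℝ) 1)
    (hη1 : 0 < 1 - η * (σ - 1)) (hη2 : 0 < 1 + (β - η) * (σ - 1))
    (hγA : γA = (σ - 1) / (1 - η * (σ - 1)))
    (hγB : γB = (σ - 1) / (1 + (β - η) * (σ - 1)))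
    (A₀ L : ℝ → ℝ) (hA₀meas : Measurable A₀) (hLmeas : Measurable L)
    (ha : 0 < a)
    (hA₀a : ∀ i ∈ Set.Icc (0:ℝ) n, a ≤ A₀ i)
    (hA₀b : ∀ i ∈ Set.Icc (0:ℝ) n, A₀ i ≤ b)
    (hLa : ∀ i ∈ Set.Icc (0:ℝ) n, a ≤ L i)
    (hLb : ∀ i ∈ Set.Icc (0:ℝ) n, L i ≤ b)
    (hLint : (∫ i in Set.Icc (0:ℝ) n, L i) = 1) :
    γA < 0 ∧ γB < 0 ∧
    (∫ i in Set.Icc (0:ℝ) n, A₀ i ^ γB * L i ^ (β * γB)) ^ (1 / γB)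
      ≤ (∫ i in Set.Icc (0:ℝ) n, A₀ i ^ γA) ^ (1 / γA) ∧
    ((∫ i in Set.Icc (0:ℝ) n, A₀ i ^ γB * L i ^ (β * γB)) ^ (1 / γB)
        = (∫ i in Set.Icc (0:ℝ) n, A₀ i ^ γA) ^ (1 / γA)
      ↔ L =ᵐ[volume.restrict (Set.Icc (0:ℝ) n)]
          fun i => A₀ i ^ γA / ∫ k in Set.Icc (0:ℝ) n, A₀ k ^ γA) :=
  statement8_general n β σ η γA γB a hβ hσ hη1 hη2 hγA hγB A₀ L hA₀meas hLmeas ha hA₀a hLa hLint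
end

section
/- In the economy with intrasectoral externalities, profit rates are equalized in the long-run equilibrium: let σ > 0 with σ ≠ 1 and η ∈ ℝ with η(σ−1) < 1, and define μ^EQ_η(i) := A₀(i)^{(σ−1)/(1−η(σ−1))} / ∫₀ⁿ A₀(j)^{(σ−1)/(1−η(σ−1))} dj. Then the externality-adjusted profit rate evaluated at μ = μ^EQ_η equals π_η(i) = 1 − β for every i ∈ [0,n], and the corresponding aggregate consumption is X_η(μ^EQ_η) = (∫₀ⁿ A₀(j)^{(σ−1)/(1−η(σ−1))} dj)^{(1−η(σ−1))/(σ−1)}. -/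
open MeasureTheory Set Real

/-! Write `q = (σ-1)/(1-η(σ-1))` and `S = ∫ A₀^q`, so that `μ = A₀^q / S`. The exponent `q` is the
one for which `(1 + q(1-β+η))(σ-1)/ρ = q`, so the integrand `(A₀ μ^(1-β+η))^((σ-1)/ρ)` equals
`A₀^q · S^(-(1-β+η)(σ-1)/ρ)`, and the integral is `S^((1-η(σ-1))/ρ)`. In the profit rate the powers
of `A₀ i` cancel since `q(η(σ-1)-1)/ρ = -(σ-1)/ρ`, and the powers of `S` cancel against that
integral. -/

section RpowBounds

variable {a b x : ℝ}

theorem rpow_le_max_rpow_of_mem_Icc (ha : 0 < a) (hx : x ∈ Icc a b) (q : ℝ) :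
    x ^ q ≤ max (a ^ q) (b ^ q) := by
  rcases le_total 0 q with hq | hq
  · exact le_max_of_le_right (rpow_le_rpow (ha.le.trans hx.1) hx.2 hq)
  · exact le_max_of_le_left (rpow_le_rpow_of_nonpos ha hx.1 hq)

theorem min_rpow_le_rpow_of_mem_Icc (ha : 0 < a) (hx : x ∈ Icc a b) (q : ℝ) :
    min (a ^ q) (b ^ q) ≤ x ^ q := by
  rcases le_total 0 q with hq | hq
  · exact min_le_of_left_le (rpow_le_rpow ha.le hx.1 hq)
  · exact min_le_of_right_le (rpow_le_rpow_of_nonpos (ha.trans_le hx.1) hx.2 hq)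

end RpowBounds

section SetIntegral

variable {α : Type*} [MeasurableSpace α] {μ : Measure α} {s : Set α} {f : α → ℝ} {a b : ℝ}

theorem integrableOn_rpow_of_mem_Icc (hs : MeasurableSet s) (hμs : μ s < ⊤) (hf : Measurable f)
    (ha : 0 < a) (hf_mem : ∀ x ∈ s, f x ∈ Icc a b) (q : ℝ) :
    IntegrableOn (fun x => f x ^ q) s μ := by
  refine Measure.integrableOn_of_bounded (M := max (a ^ q) (b ^ q)) hμs.ne
    (hf.pow_const q).aestronglyMeasurable ?_
  filter_upwards [ae_restrict_mem hs] with x hx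
  have hfx : 0 ≤ f x := ha.le.trans (hf_mem x hx).1
  rw [norm_of_nonneg (rpow_nonneg hfx q)]
  exact rpow_le_max_rpow_of_mem_Icc ha (hf_mem x hx) q

theorem setIntegral_rpow_pos_of_mem_Icc (hs : MeasurableSet s) (hμs₀ : 0 < μ s) (hμs : μ s < ⊤)
    (hf : Measurable f) (ha : 0 < a) (hf_mem : ∀ x ∈ s, f x ∈ Icc a b) (q : ℝ) :
    0 < ∫ x in s, f x ^ q ∂μ := by
  have hb : 0 < b := by
    obtain ⟨x, hx⟩ := nonempty_of_measure_ne_zero hμs₀.ne'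
    exact ha.trans_le ((hf_mem x hx).1.trans (hf_mem x hx).2)
  have hmin : 0 < min (a ^ q) (b ^ q) := lt_min (rpow_pos_of_pos ha q) (rpow_pos_of_pos hb q)
  calc 0 < μ.real s * min (a ^ q) (b ^ q) :=
        mul_pos (ENNReal.toReal_pos hμs₀.ne' hμs.ne) hmin
    _ ≤ ∫ x in s, f x ^ q ∂μ := by
        rw [← smul_eq_mul]
        exact setIntegral_ge_of_const_le hs hμs.ne
          (fun x hx => min_rpow_le_rpow_of_mem_Icc ha (hf_mem x hx) q)
          (integrableOn_rpow_of_mem_Icc hs hμs hf ha hf_mem q)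

end SetIntegral

section Rpow

variable {x S : ℝ}

theorem mul_rpow_div_rpow (hx : 0 < x) (hS : 0 ≤ S) (q e θ : ℝ) :
    (x * (x ^ q / S) ^ e) ^ θ = x ^ ((q * e + 1) * θ) / S ^ (e * θ) := by
  rw [div_rpow (rpow_nonneg hx.le q) hS, ← rpow_mul hx.le, ← mul_div_assoc, mul_comm x,
    ← rpow_add_one hx.ne', div_rpow (rpow_nonneg hx.le _) (rpow_nonneg hS _),
    ← rpow_mul hx.le, ← rpow_mul hS]

theorem mul_rpow_mul_div_rpow_div_rpow_neg (hx : 0 < x) (hS : 0 < S) {q p θ : ℝ} (h : q * p = -θ)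
    (c : ℝ) : c * x ^ θ * (x ^ q / S) ^ p / S ^ (-p) = c := by
  rw [div_rpow (rpow_nonneg hx.le q) hS.le, ← rpow_mul hx.le, h, rpow_neg hx.le,
    rpow_neg hS.le]
  field_simp [(rpow_pos_of_pos hx θ).ne', (rpow_pos_of_pos hS p).ne']

end Rpow

theorem setIntegral_mul_rpow_div_integral_rpow {α : Type*} [MeasurableSpace α] {μ : Measure α}
    {s : Set α} {f : α → ℝ} (hs : MeasurableSet s) (hf : ∀ x ∈ s, 0 < f x) {q e θ : ℝ}
    (hS : 0 < ∫ x in s, f x ^ q ∂μ) (hqeθ : (q * e + 1) * θ = q) :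
    ∫ x in s, (f x * (f x ^ q / ∫ y in s, f y ^ q ∂μ) ^ e) ^ θ ∂μ
      = (∫ x in s, f x ^ q ∂μ) ^ (1 - e * θ) := by
  rw [setIntegral_congr_fun hs fun x hx => by rw [mul_rpow_div_rpow (hf x hx) hS.le, hqeθ],
    integral_div, rpow_sub hS, rpow_one]

/-- In the economy with intrasectoral externalities of
intensity η, profit rates are equalized in the long-run equilibrium: at
`μEQη i = A₀ i ^ ((σ-1)/(1-η(σ-1))) / ∫ A₀ ^ ((σ-1)/(1-η(σ-1)))` the
externality-adjusted profit rate equals `1 - β` for every `i ∈ [0,n]`, and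
aggregate consumption equals
`(∫ A₀ ^ ((σ-1)/(1-η(σ-1))))^{(1-η(σ-1))/(σ-1)}`. -/
theorem statement9
    (n β σ ρ η a b : ℝ)
    (hn : 0 < n) (hβ : β ∈ Set.Ioo (0:ℝ) 1) (hσpos : 0 < σ) (hσne : σ ≠ 1)
    (hρ : ρ = σ * (1 - β) + β)
    (hη : η * (σ - 1) < 1)
    (A₀ : ℝ → ℝ) (hA₀meas : Measurable A₀)
    (ha : 0 < a)
    (hA₀a : ∀ i ∈ Set.Icc (0:ℝ) n, a ≤ A₀ i)
    (hA₀b : ∀ i ∈ Set.Icc (0:ℝ) n, A₀ i ≤ b)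
    (μEQ : ℝ → ℝ)
    (hμEQ : ∀ i, μEQ i = A₀ i ^ ((σ - 1) / (1 - η * (σ - 1))) /
      ∫ j in Set.Icc (0:ℝ) n, A₀ j ^ ((σ - 1) / (1 - η * (σ - 1)))) :
    (∀ i ∈ Set.Icc (0:ℝ) n,
      (1 - β) * A₀ i ^ ((σ - 1) / ρ) * μEQ i ^ ((η * (σ - 1) - 1) / ρ) /
        (∫ j in Set.Icc (0:ℝ) n, (A₀ j * μEQ j ^ (1 - β + η)) ^ ((σ - 1) / ρ))
      = 1 - β) ∧
    (∫ j in Set.Icc (0:ℝ) n, (A₀ j * μEQ j ^ (1 - β + η)) ^ ((σ - 1) / ρ)) ^ (ρ / (σ - 1))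
      = (∫ j in Set.Icc (0:ℝ) n, A₀ j ^ ((σ - 1) / (1 - η * (σ - 1))))
          ^ ((1 - η * (σ - 1)) / (σ - 1)) := by
  obtain ⟨hβ₀, hβ₁⟩ := hβ
  have hρ₀ : ρ ≠ 0 := by rw [hρ]; nlinarith
  set q := (σ - 1) / (1 - η * (σ - 1))
  have hq : q * (1 - η * (σ - 1)) = σ - 1 := div_mul_cancel₀ _ (by linarith)
  have hA₀_pos : ∀ i ∈ Icc 0 n, 0 < A₀ i := fun i hi => ha.trans_le (hA₀a i hi)
  have hS_pos := setIntegral_rpow_pos_of_mem_Icc (μ := volume) measurableSet_Icc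
    (by simpa [Real.volume_Icc] using hn) measure_Icc_lt_top hA₀meas ha
    (fun i hi => ⟨hA₀a i hi, hA₀b i hi⟩) q
  obtain rfl : μEQ = fun i => A₀ i ^ q / ∫ j in Icc 0 n, A₀ j ^ q := funext hμEQ
  have hX := setIntegral_mul_rpow_div_integral_rpow measurableSet_Icc hA₀_pos hS_pos
    (e := 1 - β + η) (θ := (σ - 1) / ρ) (by field_simp; linear_combination -hq - q * hρ)
  rw [show 1 - (1 - β + η) * ((σ - 1) / ρ) = -((η * (σ - 1) - 1) / ρ) by
    field_simp; linear_combination hρ] at hX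
  refine ⟨fun i hi => ?_, ?_⟩
  · rw [hX]
    exact mul_rpow_mul_div_rpow_div_rpow_neg (hA₀_pos i hi) hS_pos
      (by field_simp; linear_combination -hq) _
  · rw [hX, ← rpow_mul hS_pos.le]
    congr 1
    field_simp [sub_ne_zero.mpr hσne]
    ring
end

section
/- With sufficiently strong negative externalities the long-run equilibrium minimizes aggregate consumption: let σ > 1 and η < β − 1 (so θ := (1−β+η)(σ−1)/ρ < 0 and η(σ−1) < 1 holds automatically). Then for every firm distribution μ that is strictly positive almost everywhere, X_η(μ) ≥ X_η(μ^EQ_η), where μ^EQ_η(i) := A₀(i)^{(σ−1)/(1−η(σ−1))} / ∫₀ⁿ A₀(j)^{(σ−1)/(1−η(σ−1))} dj; i.e. the decentralized long-run equilibrium distribution minimizes X_η over strictly positive firm distributions. -/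
open MeasureTheory Set Real
open scoped ENNReal

/-!
With `q = (σ - 1) / ρ` and `θ = (1 - β + η) q < 0`, the integrand of `X_η` is `A₀ ^ q * μ ^ θ`,
a convex function of `μ`. The equilibrium density `μEQ ∝ A₀ ^ r` with `q = r (1 - θ)` makes the
marginal term `A₀ ^ q * μEQ ^ (θ - 1)` constant across sectors, so integrating the tangent-line
inequality `x ^ θ ≥ y ^ θ + θ y ^ (θ - 1) (x - y)` at `y = μEQ` against `A₀ ^ q` kills the linear
term (both densities have mass one) and gives `∫ A₀ ^ q μEQ ^ θ ≤ ∫ A₀ ^ q μ ^ θ`.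
-/

theorem Real.one_add_mul_sub_one_le_rpow_of_nonpos {θ t : ℝ} (hθ : θ ≤ 0) (ht : 0 < t) :
    1 + θ * (t - 1) ≤ t ^ θ := by
  have hbern := one_add_mul_self_le_rpow_one_add (s := t⁻¹ - 1) (by linarith [inv_pos.2 ht])
    (p := 1 - θ) (by linarith)
  rw [add_sub_cancel, inv_rpow ht.le, ← rpow_neg ht.le, neg_sub] at hbern
  calc 1 + θ * (t - 1) = t * (1 + (1 - θ) * (t⁻¹ - 1)) := by field_simp; ring
    _ ≤ t * t ^ (θ - 1) := by gcongr
    _ = t ^ θ := by rw [rpow_sub_one ht.ne', mul_div_cancel₀ _ ht.ne']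

theorem Real.rpow_tangent_le_of_nonpos {θ x y : ℝ} (hθ : θ ≤ 0) (hx : 0 < x) (hy : 0 < y) :
    y ^ θ + θ * y ^ (θ - 1) * (x - y) ≤ x ^ θ := by
  have hbern := one_add_mul_sub_one_le_rpow_of_nonpos hθ (div_pos hx hy)
  rw [div_rpow hx.le hy.le] at hbern
  have hyθ := rpow_pos_of_pos hy θ
  calc y ^ θ + θ * y ^ (θ - 1) * (x - y) = y ^ θ * (1 + θ * (x / y - 1)) := by
        rw [rpow_sub_one hy.ne']; field_simp
    _ ≤ y ^ θ * (x ^ θ / y ^ θ) := by gcongr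
    _ = x ^ θ := mul_div_cancel₀ _ hyθ.ne'

namespace MeasureTheory

variable {α : Type*} [MeasurableSpace α] {m : Measure α}

theorem ofReal_integral_le_lintegral_ofReal {f : α → ℝ} (hf : Integrable f m) :
    ENNReal.ofReal (∫ x, f x ∂m) ≤ ∫⁻ x, ENNReal.ofReal (f x) ∂m :=
  calc ENNReal.ofReal (∫ x, f x ∂m)
      ≤ ENNReal.ofReal (∫⁻ x, ENNReal.ofReal (f x) ∂m).toReal := by
        gcongr
        rw [integral_eq_lintegral_pos_part_sub_lintegral_neg_part hf]
        linarith [ENNReal.toReal_nonneg (a := ∫⁻ x, ENNReal.ofReal (-f x) ∂m)]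
    _ ≤ ∫⁻ x, ENNReal.ofReal (f x) ∂m := ENNReal.ofReal_toReal_le

theorem integrableOn_rpow_of_le {A : α → ℝ} (hA : Measurable A) {s : Set α} (hs : m s ≠ ∞)
    {r b : ℝ} (hr : 0 ≤ r) (hA_nonneg : ∀ i ∈ s, 0 ≤ A i) (hAb : ∀ i ∈ s, A i ≤ b)
    (hs_meas : MeasurableSet s) :
    IntegrableOn (fun i ↦ A i ^ r) s m := by
  refine Measure.integrableOn_of_bounded (M := b ^ r) hs (hA.pow_const r).aestronglyMeasurable ?_
  filter_upwards [ae_restrict_mem hs_meas] with i hi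
  rw [norm_of_nonneg (rpow_nonneg (hA_nonneg i hi) r)]
  exact rpow_le_rpow (hA_nonneg i hi) (hAb i hi) hr

theorem setIntegral_pos_of_le {f : α → ℝ} {s : Set α} {c : ℝ} (hc : 0 < c)
    (hs_meas : MeasurableSet s) (hs : m s ≠ ∞) (hs_pos : 0 < m.real s) (hf : IntegrableOn f s m)
    (hcf : ∀ i ∈ s, c ≤ f i) :
    0 < ∫ x in s, f x ∂m := by
  have hlower := setIntegral_mono_on (integrableOn_const hs) hf hs_meas hcf
  rw [setIntegral_const, smul_eq_mul] at hlower
  exact (mul_pos hs_pos hc).trans_le hlower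

theorem lintegral_mul_rpow_le_of_mul_rpow_sub_one_ae_eq {θ C : ℝ} (hθ : θ ≤ 0)
    {w ν μ : α → ℝ} (hw : ∀ᵐ x ∂m, 0 ≤ w x) (hν : ∀ᵐ x ∂m, 0 < ν x) (hμ : ∀ᵐ x ∂m, 0 < μ x)
    (hνi : Integrable ν m) (hμi : Integrable μ m) (hμν : ∫ x, μ x ∂m = ∫ x, ν x ∂m)
    (hC : ∀ᵐ x ∂m, w x * ν x ^ (θ - 1) = C) :
    ∫⁻ x, ENNReal.ofReal (w x * ν x ^ θ) ∂m ≤ ∫⁻ x, ENNReal.ofReal (w x * μ x ^ θ) ∂m := by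
  have hwν : (fun x ↦ w x * ν x ^ θ) =ᵐ[m] fun x ↦ C * ν x := by
    filter_upwards [hν, hC] with x hνx hCx
    rw [← hCx, mul_assoc, rpow_sub_one hνx.ne', div_mul_cancel₀ _ hνx.ne']
  have htangent : ∀ᵐ x ∂m, C * ν x + θ * C * (μ x - ν x) ≤ w x * μ x ^ θ := by
    filter_upwards [hw, hν, hμ, hC, hwν] with x hwx hνx hμx hCx hwνx
    rw [← hwνx, ← hCx]
    calc _ = w x * (ν x ^ θ + θ * ν x ^ (θ - 1) * (μ x - ν x)) := by ring
      _ ≤ w x * μ x ^ θ := by gcongr; exact rpow_tangent_le_of_nonpos hθ hμx hνx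
  have hwνi : Integrable (fun x ↦ w x * ν x ^ θ) m := (hνi.const_mul C).congr hwν.symm
  have hwν_nonneg : 0 ≤ᵐ[m] fun x ↦ w x * ν x ^ θ := by
    filter_upwards [hw, hν] with x hwx hνx
    positivity
  have hdev : Integrable (fun x ↦ θ * C * (μ x - ν x)) m := (hμi.sub hνi).const_mul _
  have hlower_integral : ∫ x, w x * ν x ^ θ ∂m = ∫ x, C * ν x + θ * C * (μ x - ν x) ∂m := by
    rw [integral_congr_ae hwν, integral_add (hνi.const_mul C) hdev, integral_const_mul (θ * C),
      integral_sub hμi hνi, hμν, sub_self, mul_zero, add_zero]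
  calc ∫⁻ x, ENNReal.ofReal (w x * ν x ^ θ) ∂m
      = ENNReal.ofReal (∫ x, C * ν x + θ * C * (μ x - ν x) ∂m) := by
        rw [← hlower_integral, ofReal_integral_eq_lintegral_ofReal hwνi hwν_nonneg]
    _ ≤ ∫⁻ x, ENNReal.ofReal (C * ν x + θ * C * (μ x - ν x)) ∂m :=
        ofReal_integral_le_lintegral_ofReal ((hνi.const_mul C).add hdev)
    _ ≤ ∫⁻ x, ENNReal.ofReal (w x * μ x ^ θ) ∂m := by
        refine lintegral_mono_ae ?_
        filter_upwards [htangent] with x hx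
        exact ENNReal.ofReal_le_ofReal hx

theorem lintegral_mul_rpow_le_of_normalized {θ q r : ℝ} (hθ : θ ≤ 0) (hqr : q = r * (1 - θ))
    {A μ : α → ℝ} (hA : ∀ᵐ x ∂m, 0 < A x) (hAr : Integrable (fun x ↦ A x ^ r) m)
    (hS : 0 < ∫ x, A x ^ r ∂m) (hμ : ∀ᵐ x ∂m, 0 < μ x) (hμ_int : ∫ x, μ x ∂m = 1) :
    ∫⁻ x, ENNReal.ofReal (A x ^ q * (A x ^ r / ∫ y, A y ^ r ∂m) ^ θ) ∂m ≤
      ∫⁻ x, ENNReal.ofReal (A x ^ q * μ x ^ θ) ∂m := by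
  set S := ∫ y, A y ^ r ∂m
  refine lintegral_mul_rpow_le_of_mul_rpow_sub_one_ae_eq (C := S ^ (1 - θ)) hθ ?_ ?_ hμ
    (hAr.div_const S) (Integrable.of_integral_ne_zero (by simp [hμ_int])) ?_ ?_
  · filter_upwards [hA] with x hx
    positivity
  · filter_upwards [hA] with x hx
    positivity
  · rw [hμ_int, integral_div, div_self hS.ne']
  · filter_upwards [hA] with x hx
    rw [div_rpow (rpow_nonneg hx.le r) hS.le, ← rpow_mul hx.le, mul_div_assoc', ← rpow_add hx, hqr,
      ← mul_add, sub_add_sub_cancel', sub_self, mul_zero, rpow_zero, one_div, ← rpow_neg hS.le,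
      neg_sub]

end MeasureTheory

theorem exponents_of_strong_negative_externality {β σ ρ η θ : ℝ} (hβ : β ∈ Ioo (0:ℝ) 1)
    (hσ : 1 < σ) (hρ : ρ = σ * (1 - β) + β) (hη : η < β - 1) (hθ : θ = (1 - β + η) * (σ - 1) / ρ) :
    0 < ρ ∧ θ < 0 ∧ η * (σ - 1) < 1 ∧
      (σ - 1) / ρ = (σ - 1) / (1 - η * (σ - 1)) * (1 - θ) := by
  obtain ⟨hβ0, hβ1⟩ := hβ
  have hρ_pos : 0 < ρ := by nlinarith
  have hησ : η * (σ - 1) < 1 := by nlinarith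
  refine ⟨hρ_pos, ?_, hησ, ?_⟩
  · rw [hθ]; exact div_neg_of_neg_of_pos (by nlinarith) hρ_pos
  · have h1θ : 1 - θ = (1 - η * (σ - 1)) / ρ := by
      rw [hθ]; field_simp; rw [hρ]; ring
    have hd : 1 - (σ - 1) * η ≠ 0 := by linarith
    rw [h1θ]
    field_simp

/-- With sufficiently strong negative externalities
(σ > 1 and η < β - 1, so θ := (1-β+η)(σ-1)/ρ < 0 and η(σ-1) < 1 holds
automatically) the long-run equilibrium minimizes aggregate consumption:
`X_η μ ≥ X_η μEQη` for every a.e. strictly positive firm distribution μ,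
where aggregate consumption is defined with `ℝ≥0∞` values to allow for an
infinite defining integral. -/
theorem statement11
    (n β σ ρ η θ a b : ℝ)
    (hn : 0 < n) (hβ : β ∈ Set.Ioo (0:ℝ) 1) (hσ : 1 < σ)
    (hρ : ρ = σ * (1 - β) + β)
    (hη : η < β - 1)
    (hθ : θ = (1 - β + η) * (σ - 1) / ρ)
    (A₀ : ℝ → ℝ) (hA₀meas : Measurable A₀)
    (ha : 0 < a)
    (hA₀a : ∀ i ∈ Set.Icc (0:ℝ) n, a ≤ A₀ i)
    (hA₀b : ∀ i ∈ Set.Icc (0:ℝ) n, A₀ i ≤ b)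
    (Xη : (ℝ → ℝ) → ℝ≥0∞)
    (hXη : ∀ μ : ℝ → ℝ,
      Xη μ = (∫⁻ j in Set.Icc (0:ℝ) n,
        ENNReal.ofReal ((A₀ j * μ j ^ (1 - β + η)) ^ ((σ - 1) / ρ))) ^ (ρ / (σ - 1)))
    (μEQ : ℝ → ℝ)
    (hμEQ : ∀ i, μEQ i = A₀ i ^ ((σ - 1) / (1 - η * (σ - 1))) /
      ∫ j in Set.Icc (0:ℝ) n, A₀ j ^ ((σ - 1) / (1 - η * (σ - 1)))) :
    θ < 0 ∧ η * (σ - 1) < 1 ∧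
    ∀ μ : ℝ → ℝ, Measurable μ → (∀ i ∈ Set.Icc (0:ℝ) n, 0 ≤ μ i) →
      (∫ i in Set.Icc (0:ℝ) n, μ i) = 1 →
      (∀ᵐ i ∂(volume.restrict (Set.Icc (0:ℝ) n)), 0 < μ i) →
      Xη μEQ ≤ Xη μ := by
  obtain ⟨hρ_pos, hθ_neg, hησ, hqr⟩ := exponents_of_strong_negative_externality hβ hσ hρ hη hθ
  refine ⟨hθ_neg, hησ, fun μ _ hμ_nonneg hμ_int hμ_pos ↦ ?_⟩
  set q := (σ - 1) / ρ
  set r := (σ - 1) / (1 - η * (σ - 1))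
  have hr : 0 ≤ r := (div_pos (by linarith) (by linarith)).le
  have hA₀_pos : ∀ i ∈ Icc (0:ℝ) n, 0 < A₀ i := fun i hi ↦ ha.trans_le (hA₀a i hi)
  have hAr_int : IntegrableOn (fun j ↦ A₀ j ^ r) (Icc 0 n) :=
    integrableOn_rpow_of_le hA₀meas measure_Icc_lt_top.ne hr
      (fun i hi ↦ (hA₀_pos i hi).le) hA₀b measurableSet_Icc
  have hS_pos : 0 < ∫ j in Icc (0:ℝ) n, A₀ j ^ r :=
    setIntegral_pos_of_le (rpow_pos_of_pos ha r) measurableSet_Icc measure_Icc_lt_top.ne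
      (by simpa [Real.volume_real_Icc_of_le hn.le]) hAr_int
      fun i hi ↦ rpow_le_rpow ha.le (hA₀a i hi) hr
  have hX : ∀ ν : ℝ → ℝ, (∀ i ∈ Icc (0:ℝ) n, 0 ≤ ν i) →
      Xη ν = (∫⁻ j in Icc (0:ℝ) n, ENNReal.ofReal (A₀ j ^ q * ν j ^ θ)) ^ (ρ / (σ - 1)) := by
    intro ν hν
    have hθq : (1 - β + η) * q = θ := by rw [hθ]; ring
    rw [hXη]
    congr 1
    refine setLIntegral_congr_fun measurableSet_Icc fun j hj ↦ ?_
    rw [mul_rpow (hA₀_pos j hj).le (rpow_nonneg (hν j hj) _), ← rpow_mul (hν j hj), hθq]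
  have hμEQ_nonneg : ∀ i ∈ Icc (0:ℝ) n, 0 ≤ μEQ i := fun i hi ↦ by
    rw [hμEQ]; exact (div_pos (rpow_pos_of_pos (hA₀_pos i hi) r) hS_pos).le
  rw [hX μEQ hμEQ_nonneg, hX μ hμ_nonneg, funext hμEQ]
  refine ENNReal.rpow_le_rpow ?_ (div_pos hρ_pos (by linarith)).le
  exact lintegral_mul_rpow_le_of_normalized hθ_neg.le hqr
    ((ae_restrict_iff' measurableSet_Icc).2 (ae_of_all _ hA₀_pos)) hAr_int hS_pos hμ_pos hμ_int
end

section
/- In the economy with immobile labour, profit rates are equalized in the long-run equilibrium: let σ > 0 with σ ≠ 1 and η ∈ ℝ with (β−η)(σ−1) + 1 > 0, and define μ^EQ_L(i) := (A₀(i) L(i)^β)^{(σ−1)/((β−η)(σ−1)+1)} / ∫₀ⁿ (A₀(j) L(j)^β)^{(σ−1)/((β−η)(σ−1)+1)} dj. Then the immobile-labour profit rate evaluated at μ = μ^EQ_L equals π_L(i) = 1 − β for every i ∈ [0,n]. -/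
open MeasureTheory Set Real

/-!
With `g = A₀ L^β`, `k = (β - η)(σ - 1) + 1`, `e = (σ - 1)/k`, `s = (σ - 1)/σ`, `t = 1 + η - β`
and `D = ∫ g^e`, the equilibrium distribution is `μ = g^e / D`. The exponents satisfy
`(1 + e t) s = e`, so `(g μ^t)^s = g^e D^{-ts}` and the denominator of the profit rate is
`D^{1 - ts} = D^{k/σ}`; since `e k/σ = s`, the numerator is `(1 - β) g^s g^{-s} D^{k/σ}` as well.
-/

lemma rpow_mul_div_rpow_rpow {x D e s t : ℝ} (hx : 0 < x) (hD : 0 < D)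
    (hexp : (e * t + 1) * s = e) :
    (x * (x ^ e / D) ^ t) ^ s = x ^ e * D ^ (-(t * s)) := by
  rw [div_rpow (rpow_nonneg hx.le e) hD.le, ← rpow_mul hx.le, mul_div_assoc',
    mul_comm x, ← rpow_add_one hx.ne', div_rpow (rpow_nonneg hx.le _) (rpow_nonneg hD.le t),
    ← rpow_mul hx.le, ← rpow_mul hD.le, hexp, rpow_neg hD.le, div_eq_mul_inv]

lemma rpow_mul_div_rpow_rpow_neg {x D e r s : ℝ} (hx : 0 < x) (hD : 0 < D) (hexp : e * r = s) :
    x ^ s * (x ^ e / D) ^ (-r) = D ^ r := by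
  rw [div_rpow (rpow_nonneg hx.le e) hD.le, ← rpow_mul hx.le, mul_neg, hexp, rpow_neg hx.le,
    rpow_neg hD.le]
  have : x ^ s ≠ 0 := (rpow_pos_of_pos hx s).ne'
  field_simp

lemma mul_rpow_mem_Icc {a b x y p : ℝ} (ha : 0 < a) (hp : 0 ≤ p) (hx : x ∈ Icc a b)
    (hy : y ∈ Icc a b) : x * y ^ p ∈ Icc (a * a ^ p) (b * b ^ p) :=
  ⟨mul_le_mul hx.1 (rpow_le_rpow ha.le hy.1 hp) (rpow_nonneg ha.le p) (ha.trans_le hx.1).le,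
    mul_le_mul hx.2 (rpow_le_rpow (ha.trans_le hy.1).le hy.2 hp)
      (rpow_nonneg (ha.trans_le hy.1).le p) (ha.trans_le (hx.1.trans hx.2)).le⟩

section Integral

variable {α : Type*} [MeasurableSpace α] {ν : Measure α} {S : Set α}

lemma setIntegral_pos_of_pos_on {f : α → ℝ} (hS : MeasurableSet S) (hνS : ν S ≠ 0)
    (hf : ∀ x ∈ S, 0 < f x) (hfi : IntegrableOn f S ν) : 0 < ∫ x in S, f x ∂ν := by
  have hsupport : Function.support f ∩ S = S := inter_eq_right.mpr fun x hx => (hf x hx).ne'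
  rw [setIntegral_pos_iff_support_of_nonneg_ae
    (ae_restrict_of_forall_mem hS fun x hx => (hf x hx).le) hfi, hsupport]
  exact pos_iff_ne_zero.mpr hνS

lemma integrableOn_rpow_of_mem_Icc_s12 {f : α → ℝ} (hf : Measurable f) (hS : MeasurableSet S)
    (hνS : ν S ≠ ⊤) {c C : ℝ} (hc : 0 < c) (hfS : ∀ x ∈ S, f x ∈ Icc c C) (p : ℝ) :
    IntegrableOn (fun x => f x ^ p) S ν := by
  obtain ⟨M, hM⟩ := isCompact_Icc.exists_bound_of_continuousOn
    (continuousOn_id.rpow_const fun y hy => Or.inl (hc.trans_le hy.1).ne' :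
      ContinuousOn (fun y : ℝ => y ^ p) (Icc c C))
  exact Measure.integrableOn_of_bounded hνS (hf.pow_const p).aestronglyMeasurable
    (ae_restrict_of_forall_mem hS fun x hx => hM _ (hfS x hx))

lemma setIntegral_rpow_mul_normalized_rpow {g : α → ℝ} {e s t : ℝ} (hS : MeasurableSet S)
    (hg : ∀ x ∈ S, 0 < g x) (hD : 0 < ∫ x in S, g x ^ e ∂ν) (hexp : (e * t + 1) * s = e) :
    ∫ x in S, (g x * (g x ^ e / ∫ y in S, g y ^ e ∂ν) ^ t) ^ s ∂ν =
      (∫ x in S, g x ^ e ∂ν) ^ (1 - t * s) := by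
  rw [setIntegral_congr_fun hS fun x hx => rpow_mul_div_rpow_rpow (hg x hx) hD hexp,
    integral_mul_const, sub_eq_add_neg, rpow_add hD, rpow_one]

end Integral

theorem statement12_general
    (n β σ η a b : ℝ)
    (hn : 0 < n) (hβ : β ∈ Set.Ioo (0:ℝ) 1) (hσpos : 0 < σ)
    (hη : 0 < (β - η) * (σ - 1) + 1)
    (A₀ L : ℝ → ℝ) (hA₀meas : Measurable A₀) (hLmeas : Measurable L)
    (ha : 0 < a)
    (hA₀a : ∀ i ∈ Set.Icc (0:ℝ) n, a ≤ A₀ i)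
    (hA₀b : ∀ i ∈ Set.Icc (0:ℝ) n, A₀ i ≤ b)
    (hLa : ∀ i ∈ Set.Icc (0:ℝ) n, a ≤ L i)
    (hLb : ∀ i ∈ Set.Icc (0:ℝ) n, L i ≤ b)
    (μEQ : ℝ → ℝ)
    (hμEQ : ∀ i, μEQ i =
      (A₀ i * L i ^ β) ^ ((σ - 1) / ((β - η) * (σ - 1) + 1)) /
        ∫ j in Set.Icc (0:ℝ) n,
          (A₀ j * L j ^ β) ^ ((σ - 1) / ((β - η) * (σ - 1) + 1))) :
    ∀ i ∈ Set.Icc (0:ℝ) n,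
      (1 - β) * (A₀ i * L i ^ β) ^ ((σ - 1) / σ)
          * μEQ i ^ (-(((β - η) * (σ - 1) + 1) / σ)) /
        (∫ j in Set.Icc (0:ℝ) n,
          (A₀ j * L j ^ β * μEQ j ^ (1 + η - β)) ^ ((σ - 1) / σ))
      = 1 - β := by
  intro i hi
  set g : ℝ → ℝ := fun j => A₀ j * L j ^ β
  have hg_def : ∀ j, A₀ j * L j ^ β = g j := fun _ => rfl
  simp only [hμEQ, hg_def]
  set k := (β - η) * (σ - 1) + 1
  set e := (σ - 1) / k
  have hg_mem : ∀ j ∈ Icc (0:ℝ) n, g j ∈ Icc (a * a ^ β) (b * b ^ β) := fun j hj =>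
    mul_rpow_mem_Icc ha hβ.1.le ⟨hA₀a j hj, hA₀b j hj⟩ ⟨hLa j hj, hLb j hj⟩
  have hg_pos : ∀ j ∈ Icc (0:ℝ) n, 0 < g j := fun j hj =>
    (mul_pos ha (rpow_pos_of_pos ha β)).trans_le (hg_mem j hj).1
  have hD : 0 < ∫ j in Icc (0:ℝ) n, g j ^ e :=
    setIntegral_pos_of_pos_on measurableSet_Icc (by simp [hn])
      (fun j hj => rpow_pos_of_pos (hg_pos j hj) e)
      (integrableOn_rpow_of_mem_Icc_s12 (by fun_prop) measurableSet_Icc measure_Icc_lt_top.ne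
        (mul_pos ha (rpow_pos_of_pos ha β)) hg_mem e)
  have hexp_den : (e * (1 + η - β) + 1) * ((σ - 1) / σ) = e := by
    simp only [e]; field_simp; simp only [k]; ring
  have hexp_num : e * (k / σ) = (σ - 1) / σ := by
    simp only [e]; field_simp
  have hexp_tot : 1 - (1 + η - β) * ((σ - 1) / σ) = k / σ := by
    simp only [k]; field_simp; ring
  rw [setIntegral_rpow_mul_normalized_rpow measurableSet_Icc hg_pos hD hexp_den, hexp_tot,
    mul_assoc, rpow_mul_div_rpow_rpow_neg (hg_pos i hi) hD hexp_num, mul_div_assoc,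
    div_self (rpow_pos_of_pos hD _).ne', mul_one]

/-- In the economy with immobile labour, profit rates are
equalized in the long-run equilibrium: at
`μEQL i = (A₀ i L i^β)^{(σ-1)/((β-η)(σ-1)+1)} / ∫ (A₀ L^β)^{(σ-1)/((β-η)(σ-1)+1)}`
the immobile-labour profit rate equals `1 - β` for every `i ∈ [0,n]`. -/
theorem statement12
    (n β σ η a b : ℝ)
    (hn : 0 < n) (hβ : β ∈ Set.Ioo (0:ℝ) 1) (hσpos : 0 < σ) (hσne : σ ≠ 1)
    (hη : 0 < (β - η) * (σ - 1) + 1)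
    (A₀ L : ℝ → ℝ) (hA₀meas : Measurable A₀) (hLmeas : Measurable L)
    (ha : 0 < a)
    (hA₀a : ∀ i ∈ Set.Icc (0:ℝ) n, a ≤ A₀ i)
    (hA₀b : ∀ i ∈ Set.Icc (0:ℝ) n, A₀ i ≤ b)
    (hLa : ∀ i ∈ Set.Icc (0:ℝ) n, a ≤ L i)
    (hLb : ∀ i ∈ Set.Icc (0:ℝ) n, L i ≤ b)
    (hLint : (∫ i in Set.Icc (0:ℝ) n, L i) = 1)
    (μEQ : ℝ → ℝ)
    (hμEQ : ∀ i, μEQ i =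
      (A₀ i * L i ^ β) ^ ((σ - 1) / ((β - η) * (σ - 1) + 1)) /
        ∫ j in Set.Icc (0:ℝ) n,
          (A₀ j * L j ^ β) ^ ((σ - 1) / ((β - η) * (σ - 1) + 1))) :
    ∀ i ∈ Set.Icc (0:ℝ) n,
      (1 - β) * (A₀ i * L i ^ β) ^ ((σ - 1) / σ)
          * μEQ i ^ (-(((β - η) * (σ - 1) + 1) / σ)) /
        (∫ j in Set.Icc (0:ℝ) n,
          (A₀ j * L j ^ β * μEQ j ^ (1 + η - β)) ^ ((σ - 1) / σ))
      = 1 - β :=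
  statement12_general n β σ η a b hn hβ hσpos hη A₀ L hA₀meas hLmeas ha hA₀a hA₀b hLa hLb μEQ hμEQ
end
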